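/- arXiv:2006.07303 — 8 statements merged into one kernel-verified Lean document; each statement's English description precedes it below -/
import Mathlib

section
/- Let p be a prime and n ≥ 1 with p > n. Let N be an abelian group of order p^n with identity e_N, and let G be a subgroup of the holomorph Hol(N) ≤ Perm(N) such that the order of G is a power of p and G acts transitively on N. Then for every σ ∈ G and every k ≥ 0, one has (σ(e_N))^{p^k} = e_N if and only if σ^{p^k}(e_N) = e_N. -/
open Finset Polynomial

private lemma pow_mk_comm {A Q : Type*} [AddCommGroup A] [AddCommGroup Q]
    (π : A → Q) (g : Module.End ℤ A) (g' : Module.End ℤ Q)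
    (h : ∀ x, g' (π x) = π (g x)) : ∀ (j : ℕ) (x : A), (g' ^ j) (π x) = π ((g ^ j) x) := by
  intro j
  induction j with
  | zero => intro x; simp
  | succ j IH =>
      intro x
      rw [pow_succ', pow_succ', Module.End.mul_apply, Module.End.mul_apply, IH, h]

private lemma end_nilpotent {p : ℕ} (hp : p.Prime) :
    ∀ (m : ℕ) (A : Type*) [AddCommGroup A] [Finite A], Nat.card A = p ^ m →
      ∀ (f : Module.End ℤ A) (t : ℕ), f ^ (p ^ t) = 1 → (f - 1) ^ m = 0 := by
  intro m
  induction m using Nat.strong_induction_on with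
  | _ m IH =>
    intro A _ _ hcard f t hf
    rcases Nat.eq_zero_or_pos m with hm | hm
    · subst hm
      have hs : Subsingleton A := by
        rw [pow_zero] at hcard
        exact Nat.card_eq_one_iff_unique.mp hcard |>.1
      have : Subsingleton (Module.End ℤ A) :=
        ⟨fun a b => LinearMap.ext fun x => Subsingleton.elim _ _⟩
      exact Subsingleton.elim _ _
    · haveI := Fact.mk hp
      have hA : Nontrivial A := by
        have : 1 < Nat.card A := by
          rw [hcard]; exact Nat.one_lt_pow (by omega) hp.one_lt
        exact Finite.one_lt_card_iff_nontrivial.mp this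
      obtain ⟨e, he⟩ : ∃ e, p ^ t = e + 1 := by
        have := Nat.one_le_pow t p hp.pos; exact ⟨p ^ t - 1, by omega⟩
      have hfu : IsUnit f := isUnit_iff_exists.mpr
        ⟨f ^ e, by rw [← pow_succ', ← he]; exact hf, by rw [← pow_succ, ← he]; exact hf⟩
      set u := hfu.unit with hu_def
      have huf : (u : Module.End ℤ A) = f := hfu.unit_spec
      have hu1 : u ^ (p ^ t) = 1 := Units.ext (by
        rw [Units.val_pow_eq_pow_val, huf, hf, Units.val_one])
      have hΓ : IsPGroup p (Subgroup.zpowers u) := by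
        intro g
        refine ⟨t, ?_⟩
        obtain ⟨i, hi⟩ := Subgroup.mem_zpowers_iff.mp g.2
        have : (g : (Module.End ℤ A)ˣ) ^ (p ^ t) = 1 := by
          rw [← hi, ← zpow_natCast, ← zpow_mul, mul_comm, zpow_mul, zpow_natCast, hu1, one_zpow]
        exact Subtype.ext (by simpa using this)
      have hfix0 : (0 : A) ∈ MulAction.fixedPoints (Subgroup.zpowers u) A := fun g => smul_zero g
      obtain ⟨b, hb, hb0⟩ := hΓ.exists_fixed_point_of_prime_dvd_card_of_fixed_point
        (α := A) (by rw [hcard]; exact dvd_pow_self p (by omega)) hfix0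
      have hfb : f b = b := by
        have h1 := hb ⟨u, Subgroup.mem_zpowers u⟩
        rw [← huf]
        exact h1
      set B : Submodule ℤ A := LinearMap.ker (f - 1) with hB
      have hbB : b ∈ B := by
        simp [hB, LinearMap.mem_ker, LinearMap.sub_apply, hfb]
      have hBnt : 1 < Nat.card B := by
        have : Nontrivial B := ⟨⟨⟨b, hbB⟩, ⟨0, B.zero_mem⟩, by simpa using (Ne.symm hb0)⟩⟩
        exact Finite.one_lt_card_iff_nontrivial.mpr this
      have hle : B ≤ B.comap f := by
        intro x hx
        have hfx : f x = x := by
          have h2 := (LinearMap.mem_ker.mp hx)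
          rw [LinearMap.sub_apply, Module.End.one_apply, sub_eq_zero] at h2
          exact h2
        rw [Submodule.mem_comap, hfx]
        exact hx
      set fq : Module.End ℤ (A ⧸ B) := Submodule.mapQ B B f hle with hfq
      have hmk : ∀ x : A, fq (Submodule.Quotient.mk x) = Submodule.Quotient.mk (f x) :=
        fun x => rfl
      haveI : Finite (A ⧸ B) := Quotient.finite _
      have hcardQ : ∃ m' : ℕ, m' < m ∧ Nat.card (A ⧸ B) = p ^ m' := by
        have hprod := Submodule.card_eq_card_quotient_mul_card B
        have hdvd : Nat.card (A ⧸ B) ∣ p ^ m := ⟨Nat.card B, by rw [← hcard, hprod]; ring⟩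
        obtain ⟨m', hm'le, hm'⟩ := (Nat.dvd_prime_pow hp).mp hdvd
        refine ⟨m', ?_, hm'⟩
        have hpos : 0 < Nat.card (A ⧸ B) := Nat.card_pos
        have : Nat.card (A ⧸ B) < Nat.card A := by
          rw [hprod]
          nlinarith [hpos]
        rw [hcard, hm'] at this
        exact (Nat.pow_lt_pow_iff_right hp.one_lt).mp this
      obtain ⟨m', hm'lt, hm'⟩ := hcardQ
      have hfq1 : fq ^ (p ^ t) = 1 := by
        apply LinearMap.ext
        intro q
        obtain ⟨x, rfl⟩ := Submodule.Quotient.mk_surjective B q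
        rw [pow_mk_comm (Submodule.Quotient.mk) f fq (fun x => hmk x) (p ^ t) x, hf]
        rfl
      have hnil := IH m' hm'lt (A ⧸ B) hm' fq t hfq1
      have hsub : ∀ x : A, (fq - 1) (Submodule.Quotient.mk x)
          = Submodule.Quotient.mk ((f - 1) x) := by
        intro x
        rw [LinearMap.sub_apply, LinearMap.sub_apply, Module.End.one_apply, Module.End.one_apply,
          hmk, ← Submodule.Quotient.mk_sub]
      have hmem : ∀ x : A, ((f - 1) ^ m') x ∈ B := by
        intro x
        have h3 := pow_mk_comm (Submodule.Quotient.mk) (f - 1) (fq - 1) hsub m' x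
        rw [hnil] at h3
        have : Submodule.Quotient.mk (((f - 1) ^ m') x) = (0 : A ⧸ B) := by
          rw [← h3]; rfl
        exact (Submodule.Quotient.mk_eq_zero B).mp this
      have hstep : (f - 1) ^ (m' + 1) = 0 := by
        apply LinearMap.ext
        intro x
        rw [pow_succ', Module.End.mul_apply]
        have := hmem x
        rw [hB, LinearMap.mem_ker] at this
        simpa using this
      calc (f - 1) ^ m = (f - 1) ^ (m - (m' + 1)) * (f - 1) ^ (m' + 1) := by
            rw [← pow_add]; congr 1; omega
        _ = 0 := by rw [hstep, mul_zero]

private lemma geom_poly (M : ℕ) :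
    ∑ i ∈ range M, (1 + (X : ℤ[X])) ^ i
      = ∑ j ∈ range M, (((M.choose (j + 1)) : ℤ[X]) * X ^ j) := by
  induction M with
  | zero => simp
  | succ M IH =>
    rw [sum_range_succ, IH]
    have hpascal : ∀ j : ℕ, (((M + 1).choose (j + 1) : ℤ[X]) * X ^ j)
        = ((M.choose (j + 1) : ℤ[X]) * X ^ j) + ((M.choose j : ℤ[X]) * X ^ j) := by
      intro j
      rw [Nat.choose_succ_succ, Nat.cast_add, add_mul, add_comm]
    calc ∑ j ∈ range M, ((M.choose (j + 1) : ℤ[X]) * X ^ j) + (1 + X) ^ M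
        = ∑ j ∈ range (M + 1), ((M.choose (j + 1) : ℤ[X]) * X ^ j) + (1 + X) ^ M := by
          rw [sum_range_succ, Nat.choose_succ_self, Nat.cast_zero, zero_mul, add_zero]
      _ = ∑ j ∈ range (M + 1), ((M.choose (j + 1) : ℤ[X]) * X ^ j)
            + ∑ j ∈ range (M + 1), ((M.choose j : ℤ[X]) * X ^ j) := by
          congr 1
          rw [add_comm (1 : ℤ[X]) X, add_pow]
          refine Finset.sum_congr rfl fun j _ => ?_
          rw [one_pow, mul_one, mul_comm]
      _ = ∑ j ∈ range (M + 1), (((M + 1).choose (j + 1) : ℤ[X]) * X ^ j) := by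
          rw [← Finset.sum_add_distrib]
          exact (Finset.sum_congr rfl fun j _ => (hpascal j)).symm

private lemma geom_ring {R : Type*} [Ring R] (D : R) {n : ℕ} (hD : D ^ n = 0)
    (M : ℕ) :
    ∑ i ∈ range M, (1 + D) ^ i = ∑ j ∈ range n, ((M.choose (j + 1) : R) * D ^ j) := by
  have h0 := congrArg (Polynomial.aeval D) (geom_poly M)
  rw [map_sum, map_sum] at h0
  simp only [map_pow, map_add, map_one, aeval_X, map_mul, map_natCast] at h0
  rw [h0]
  have hzero : ∀ j, n ≤ j → (M.choose (j + 1) : R) * D ^ j = 0 := by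
    intro j hj
    have : D ^ j = 0 := by
      calc D ^ j = D ^ n * D ^ (j - n) := by rw [← pow_add]; congr 1; omega
        _ = 0 := by rw [hD, zero_mul]
    rw [this, mul_zero]
  have hzero2 : ∀ j, M ≤ j → (M.choose (j + 1) : R) * D ^ j = 0 := by
    intro j hj
    rw [Nat.choose_eq_zero_of_lt (by omega), Nat.cast_zero, zero_mul]
  rw [Finset.sum_subset (Finset.range_subset_range.mpr (Nat.le_add_right M n))
      (fun j _ hj => hzero2 j (le_of_not_gt (fun h => hj (mem_range.mpr h))))]
  exact (Finset.sum_subset (Finset.range_subset_range.mpr (Nat.le_add_left n M))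
      (fun j _ hj => hzero j (le_of_not_gt (fun h => hj (mem_range.mpr h))))).symm

private lemma choose_dvd_pk {p : ℕ} (hp : p.Prime) (k s : ℕ) (hs : s + 1 < p) :
    p ^ k ∣ (p ^ k).choose (s + 1) := by
  have hpk : 1 ≤ p ^ k := Nat.one_le_pow _ _ hp.pos
  have hid := Nat.add_one_mul_choose_eq (p ^ k - 1) s
  rw [Nat.sub_add_cancel hpk] at hid
  have hdvd : p ^ k ∣ (p ^ k).choose (s + 1) * (s + 1) := ⟨(p ^ k - 1).choose s, hid.symm⟩
  have hcop : Nat.Coprime (p ^ k) (s + 1) := by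
    apply Nat.Coprime.pow_left
    rw [hp.coprime_iff_not_dvd]
    intro hdv
    have := Nat.le_of_dvd (by omega) hdv
    omega
  exact hcop.dvd_of_dvd_mul_right hdvd

/-- The holomorph of a group `N`: the normalizer, in the symmetric group `Equiv.Perm N`,
of the image of the left regular representation `N →* Equiv.Perm N`. -/
def Hol (N : Type*) [Group N] : Subgroup (Equiv.Perm N) :=
  Subgroup.normalizer (MulAction.toPermHom N N).range

theorem order_iff_stab {p n : ℕ} (hp : p.Prime) (hn : 1 ≤ n) (hpn : p > n)
    {N : Type*} [CommGroup N] [Fintype N] (hN : Fintype.card N = p ^ n)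
    (G : Subgroup (Equiv.Perm N)) (hG : G ≤ Hol N)
    (hord : ∃ m : ℕ, Nat.card G = p ^ m)
    (htrans : ∀ x y : N, ∃ σ ∈ G, σ x = y)
    (σ : Equiv.Perm N) (hσ : σ ∈ G) (k : ℕ) :
    (σ 1) ^ (p ^ k) = 1 ↔ (σ ^ (p ^ k)) 1 = 1 := by
  classical
  have hnorm : σ ∈ Subgroup.normalizer (MulAction.toPermHom N N).range := hG hσ
  have hkey : ∀ a x : N, σ (a * x) = σ a * (σ 1)⁻¹ * σ x := by
    intro a x
    have h1 : (MulAction.toPermHom N N) a ∈ (MulAction.toPermHom N N).range := ⟨a, rfl⟩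
    obtain ⟨b, hb⟩ := (Subgroup.mem_normalizer_iff.mp hnorm _).mp h1
    have hby : ∀ y : N, b * y = σ (a * σ⁻¹ y) := by
      intro y
      have h2 := congrArg (fun e : Equiv.Perm N => e y) hb
      simpa [MulAction.toPermHom_apply, MulAction.toPerm_apply, smul_eq_mul,
        Equiv.Perm.mul_apply] using h2
    have hb1 : b * σ 1 = σ a := by simpa using hby (σ 1)
    have hbx : b * σ x = σ (a * x) := by simpa using hby (σ x)
    rw [← hbx, ← hb1, mul_inv_cancel_right]
  set F : N →* N :=
    { toFun := fun x => (σ 1)⁻¹ * σ x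
      map_one' := by simp
      map_mul' := by
        intro x y
        rw [hkey]
        simp [mul_assoc, mul_left_comm, mul_comm] } with hFdef
  set f : Module.End ℤ (Additive N) := (MonoidHom.toAdditive F).toIntLinearMap with hfdef
  have hfapp : ∀ x : N, f (Additive.ofMul x) = Additive.ofMul ((σ 1)⁻¹ * σ x) := fun x => rfl
  set a : Additive N := Additive.ofMul (σ 1) with ha
  have hofmulσ : ∀ x : N, Additive.ofMul (σ x) = a + f (Additive.ofMul x) := by
    intro x
    have h1 : σ x = σ 1 * ((σ 1)⁻¹ * σ x) := by rw [mul_inv_cancel_left]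
    calc Additive.ofMul (σ x) = Additive.ofMul (σ 1 * ((σ 1)⁻¹ * σ x)) := congrArg _ h1
      _ = a + f (Additive.ofMul x) := by rw [ofMul_mul, hfapp]
  have hbridge2 : ∀ (M : ℕ) (x : N), Additive.ofMul ((σ ^ M) x)
      = Additive.ofMul ((σ ^ M) 1) + (f ^ M) (Additive.ofMul x) := by
    intro M
    induction M with
    | zero => intro x; simp
    | succ M IH =>
      intro x
      rw [pow_succ σ M, pow_succ f M, Equiv.Perm.mul_apply, Equiv.Perm.mul_apply,
        Module.End.mul_apply, IH (σ x), IH (σ 1), hofmulσ x, hofmulσ 1, map_add, map_add]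
      simp only [ofMul_one, map_zero, add_zero]
      abel
  have hbridge1 : ∀ M : ℕ, Additive.ofMul ((σ ^ M) 1)
      = (∑ i ∈ range M, f ^ i) (Additive.ofMul (σ 1)) := by
    intro M
    induction M with
    | zero => simp
    | succ M IH =>
      rw [pow_succ σ M, Equiv.Perm.mul_apply, hbridge2 M (σ 1), IH,
        Finset.sum_range_succ, LinearMap.add_apply]
  -- σ has p-power order
  obtain ⟨tord, htord⟩ := hord
  have hσp : σ ^ (p ^ tord) = 1 := by
    have h1 : (⟨σ, hσ⟩ : G) ^ (p ^ tord) = 1 := by rw [← htord]; exact pow_card_eq_one'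
    have h2 := congrArg (Subtype.val) h1
    simpa using h2
  have hfpow : f ^ (p ^ tord) = 1 := by
    apply LinearMap.ext
    intro y
    have h2 := hbridge2 (p ^ tord) (Additive.toMul y)
    rw [hσp] at h2
    simpa using h2.symm
  -- nilpotency of D = f - 1
  have hcardA : Nat.card (Additive N) = p ^ n := by
    rw [Nat.card_congr (Additive.toMul (α := N)), Nat.card_eq_fintype_card, hN]
  have hDn : (f - 1) ^ n = 0 := end_nilpotent hp n (Additive N) hcardA f tord hfpow
  set D : Module.End ℤ (Additive N) := f - 1 with hDdef
  have hf1D : f = 1 + D := by rw [hDdef]; abel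
  have hS : (∑ i ∈ range (p ^ k), f ^ i)
      = ∑ j ∈ range n, (((p ^ k).choose (j + 1) : Module.End ℤ (Additive N)) * D ^ j) := by
    rw [hf1D]
    exact geom_ring D hDn (p ^ k)
  set c : ℕ → ℕ := fun j => (p ^ k).choose (j + 1) / p ^ k with hcdef
  have hc : ∀ j, j < n → (((p ^ k).choose (j + 1) : Module.End ℤ (Additive N))) = ((p ^ k : ℕ) : Module.End ℤ (Additive N)) * ((c j : ℕ) : Module.End ℤ (Additive N)) := by
    intro j hj
    have hdvd := choose_dvd_pk hp k j (by omega)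
    rw [hcdef]
    rw [← Nat.cast_mul, Nat.mul_div_cancel' hdvd]
  set U : Module.End ℤ (Additive N) := ∑ j ∈ range n, ((c j : ℕ) : Module.End ℤ (Additive N)) * D ^ j with hUdef
  have hSU : (∑ i ∈ range (p ^ k), f ^ i) = ((p ^ k : ℕ) : Module.End ℤ (Additive N)) * U := by
    rw [hS, hUdef, Finset.mul_sum]
    refine Finset.sum_congr rfl fun j hj => ?_
    rw [hc j (mem_range.mp hj), mul_assoc]
  -- U is a unit
  obtain ⟨n', rfl⟩ : ∃ n', n = n' + 1 := ⟨n - 1, by omega⟩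
  have hc0 : c 0 = 1 := by
    simp only [hcdef, Nat.zero_add, Nat.choose_one_right]
    exact Nat.div_self (Nat.one_le_pow _ _ hp.pos)
  set E : Module.End ℤ (Additive N) := ∑ j ∈ range n', ((c (j + 1) : ℕ) : Module.End ℤ (Additive N)) * D ^ j with hEdef
  have hcommDE : Commute D E := by
    rw [hEdef]
    exact Commute.sum_right _ _ _ (fun j _ =>
      ((Nat.cast_commute (c (j + 1)) D).symm.mul_right ((Commute.refl D).pow_right j)))
  have hU1 : U = D * E + 1 := by
    rw [hUdef, Finset.sum_range_succ' _ n', hc0, Nat.cast_one, pow_zero, one_mul, hEdef,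
      Finset.mul_sum]
    congr 1
    refine Finset.sum_congr rfl fun j _ => ?_
    rw [← mul_assoc, ← (Nat.cast_commute (c (j + 1)) D).eq, mul_assoc, ← pow_succ']
  have hUunit : IsUnit U := by
    rw [hU1]
    refine IsNilpotent.isUnit_add_one ⟨n' + 1, ?_⟩
    rw [hcommDE.mul_pow, hDn, zero_mul]
  -- the final computation
  have hfin : Additive.ofMul ((σ ^ (p ^ k)) 1) = U ((p ^ k) • Additive.ofMul (σ 1)) := by
    rw [hbridge1, hSU, (Nat.cast_commute (p ^ k) U).eq, Module.End.mul_apply,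
      Module.End.natCast_apply]
  constructor
  · intro h
    have h5 := congrArg Additive.ofMul h
    rw [ofMul_pow] at h5
    have h0 : (p ^ k) • Additive.ofMul (σ 1) = (0 : Additive N) := h5
    have h1 : Additive.ofMul ((σ ^ (p ^ k)) 1) = 0 := by rw [hfin, h0, map_zero]
    exact Additive.ofMul.injective h1
  · intro h
    have h1' : Additive.ofMul ((σ ^ (p ^ k)) 1) = 0 := by rw [h]; rfl
    have h1 : U ((p ^ k) • Additive.ofMul (σ 1)) = 0 := by rw [← hfin]; exact h1'
    have h2 : (p ^ k) • Additive.ofMul (σ 1) = (0 : Additive N) := by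
      obtain ⟨v, hv⟩ := hUunit.exists_left_inv
      calc (p ^ k) • Additive.ofMul (σ 1)
          = (v * U) ((p ^ k) • Additive.ofMul (σ 1)) := by rw [hv]; rfl
        _ = 0 := by rw [Module.End.mul_apply, h1, map_zero]
    have h4 : Additive.ofMul ((σ 1) ^ (p ^ k)) = 0 := by rw [ofMul_pow]; exact h2
    exact Additive.ofMul.injective h4
end

section
/- Let p be a prime and n ≥ 3 with p > n. Let N₁ and N₂ be abelian groups of order p^n, let G₁ be a regular subgroup of Hol(N₁) and G₂ a regular subgroup of Hol(N₂). If G₁ and G₂ are isomorphic as groups, then N₁ and N₂ are isomorphic. (In the language of braces: two classical left braces of order p^n with p > n whose multiplicative groups are isomorphic have isomorphic additive groups.) -/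
/-- A subgroup of `Equiv.Perm X` is regular if it acts transitively on `X`
with trivial point stabilizers. -/
def IsRegularSubgroup {X : Type*} (G : Subgroup (Equiv.Perm X)) : Prop :=
  (∀ x y : X, ∃ σ ∈ G, σ x = y) ∧ (∀ σ ∈ G, ∀ x : X, σ x = x → σ = 1)

open Finset

section HolBasics

variable {N : Type*} [Group N]

lemma hol_apply_mul {σ : Equiv.Perm N} (hσ : σ ∈ Hol N) (x y : N) :
    σ (x * y) = σ x * (σ 1)⁻¹ * σ y := by
  have h1 : (MulAction.toPermHom N N) x ∈ (MulAction.toPermHom N N).range := ⟨x, rfl⟩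
  obtain ⟨z, hz⟩ := (Subgroup.mem_normalizer_iff.mp hσ _).mp h1
  have hy := congrArg (fun (τ : Equiv.Perm N) => τ (σ y)) hz
  have h1' := congrArg (fun (τ : Equiv.Perm N) => τ (σ 1)) hz
  simp only [MulAction.toPermHom_apply, MulAction.toPerm_apply, smul_eq_mul,
    Equiv.Perm.mul_apply, Equiv.Perm.inv_def, Equiv.symm_apply_apply] at hy h1'
  rw [mul_one] at h1'
  rw [← hy, ← h1', mul_assoc, mul_assoc, mul_inv_cancel_left]

lemma hol_apply_inv {σ : Equiv.Perm N} (hσ : σ ∈ Hol N) (y : N) :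
    σ y⁻¹ = σ 1 * (σ y)⁻¹ * σ 1 := by
  have h := hol_apply_mul hσ y y⁻¹
  rw [mul_inv_cancel] at h
  have h2 : σ y⁻¹ = (σ y * (σ 1)⁻¹)⁻¹ * σ 1 := by
    rw [eq_inv_mul_iff_mul_eq, ← h]
  rw [h2, mul_inv_rev, inv_inv, mul_assoc]

end HolBasics

section Lam

variable {N : Type*} [CommGroup N]

/-- The lambda map of an element of the holomorph, as an additive endomorphism. -/
noncomputable def lamE (σ : Equiv.Perm N) (hσ : σ ∈ Hol N) : AddMonoid.End (Additive N) :=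
  AddMonoidHom.mk' (fun x => Additive.ofMul ((σ 1)⁻¹ * σ x.toMul))
    (by
      intro a b
      have := hol_apply_mul hσ a.toMul b.toMul
      simp only [toMul_add]
      rw [← ofMul_mul]
      congr 1
      rw [this]
      group)

lemma lamE_apply (σ : Equiv.Perm N) (hσ : σ ∈ Hol N) (x : Additive N) :
    lamE σ hσ x = Additive.ofMul ((σ 1)⁻¹ * σ x.toMul) := rfl

lemma lamE_one : lamE (1 : Equiv.Perm N) (Subgroup.one_mem _) = 1 := by
  refine AddMonoidHom.ext fun x => ?_
  show Additive.ofMul (((1 : Equiv.Perm N) 1)⁻¹ * (1 : Equiv.Perm N) x.toMul) = x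
  simp

lemma lamE_mul (σ τ : Equiv.Perm N) (hσ : σ ∈ Hol N) (hτ : τ ∈ Hol N) :
    lamE (σ * τ) (Subgroup.mul_mem _ hσ hτ) = lamE σ hσ * lamE τ hτ := by
  refine AddMonoidHom.ext fun x => ?_
  show Additive.ofMul (((σ * τ) 1)⁻¹ * (σ * τ) x.toMul)
      = lamE σ hσ (lamE τ hτ x)
  rw [lamE_apply, lamE_apply]
  simp only [Equiv.Perm.mul_apply, toMul_ofMul]
  congr 1
  rw [hol_apply_mul hσ (τ 1)⁻¹ (τ x.toMul), hol_apply_inv hσ (τ 1)]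
  group

lemma lamE_pow (σ : Equiv.Perm N) (hσ : σ ∈ Hol N) (m : ℕ) :
    lamE (σ ^ m) (Subgroup.pow_mem _ hσ m) = (lamE σ hσ) ^ m := by
  induction m with
  | zero => simpa using lamE_one
  | succ m ih =>
      have h1 : σ ^ (m + 1) = σ * σ ^ m := by rw [pow_succ']
      have : lamE (σ ^ (m+1)) (Subgroup.pow_mem _ hσ (m+1))
          = lamE (σ * σ ^ m) (Subgroup.mul_mem _ hσ (Subgroup.pow_mem _ hσ m)) := by
        congr 1
      rw [this, lamE_mul σ (σ ^ m) hσ (Subgroup.pow_mem _ hσ m), ih, pow_succ']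

end Lam


lemma geom_sum_eq_choose_sum {R : Type*} [Ring R] (δ : R) (m : ℕ) :
    ∑ i ∈ range m, (δ + 1) ^ i = ∑ j ∈ range m, (m.choose (j+1) : R) * δ ^ j := by
  induction m with
  | zero => simp
  | succ m ih =>
    rw [sum_range_succ, ih]
    have hb : (δ + 1) ^ m = ∑ j ∈ range (m+1), (m.choose j : R) * δ ^ j := by
      rw [(Commute.one_right δ).add_pow]
      refine Finset.sum_congr rfl fun j hj => ?_
      rw [one_pow, mul_one, (Nat.cast_commute (m.choose j) (δ ^ j)).eq]
    rw [hb]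
    have hsplit : ∀ j ∈ range (m+1), ((m+1).choose (j+1) : R) * δ ^ j
        = (m.choose j : R) * δ ^ j + (m.choose (j+1) : R) * δ ^ j := by
      intro j _
      rw [Nat.choose_succ_succ, Nat.cast_add, add_mul]
    rw [Finset.sum_congr rfl hsplit, Finset.sum_add_distrib,
      Finset.sum_range_succ (fun j => (m.choose (j+1) : R) * δ ^ j) m,
      Nat.choose_eq_zero_of_lt (Nat.lt_succ_self m)]
    push_cast
    rw [zero_mul, add_zero, add_comm]



lemma nilpotent_index_le {A : Type*} [AddCommGroup A] [Fintype A] {p n : ℕ} (hp : p.Prime)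
    (hA : Nat.card A = p ^ n) {δ : AddMonoid.End A} (hnil : IsNilpotent δ) :
    δ ^ n = 0 := by
  classical
  obtain ⟨m, hm⟩ := hnil
  set M : ℕ → AddSubgroup A := fun j => AddMonoidHom.range (δ ^ j : AddMonoid.End A) with hM
  have hstep : ∀ j, M (j + 1) = AddSubgroup.map (δ : A →+ A) (M j) := by
    intro j
    have h1 : (δ ^ (j+1) : AddMonoid.End A) = AddMonoidHom.comp (δ : A →+ A) (δ ^ j : AddMonoid.End A) := by
      rw [pow_succ']; rfl
    show AddMonoidHom.range (δ ^ (j+1) : AddMonoid.End A) = _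
    rw [h1]; exact AddMonoidHom.range_comp _ _
  have hmono : ∀ j, M (j + 1) ≤ M j := by
    intro j x hx
    obtain ⟨y, hy⟩ := hx
    exact ⟨δ y, by rw [← hy]; show (δ ^ j) (δ y) = (δ ^ (j+1)) y; rw [pow_succ]; rfl⟩
  have hbotm : ∀ j, M (j + m) = ⊥ := by
    intro j
    refine le_bot_iff.mp ?_
    intro x hx
    obtain ⟨y, hy⟩ := hx
    rw [pow_add, hm, mul_zero] at hy
    exact AddSubgroup.mem_bot.mpr hy.symm
  have hstab : ∀ j, M (j + 1) = M j → ∀ i, M (j + i) = M j := by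
    intro j hj i
    induction i with
    | zero => rfl
    | succ i ih =>
        have : M (j + i + 1) = AddSubgroup.map (δ : A →+ A) (M (j + i)) := hstep _
        rw [show j + (i+1) = j + i + 1 from rfl, this, ih, ← hstep j, hj]
  have hcard : ∀ j, j ≤ n → Nat.card (M j) ∣ p ^ (n - j) := by
    intro j
    induction j with
    | zero =>
        intro _
        have h0 : M 0 = ⊤ := by
          refine (AddSubgroup.eq_top_iff' _).mpr fun x => ⟨x, rfl⟩
        rw [h0, Nat.sub_zero]
        rw [AddSubgroup.card_top, hA]
    | succ j ih =>
        intro hj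
        have hjn : j ≤ n := Nat.le_of_succ_le hj
        by_cases hbot : M j = ⊥
        · have : M (j + 1) = ⊥ := le_bot_iff.mp (hbot ▸ hmono j)
          rw [this, AddSubgroup.card_bot]
          exact one_dvd _
        · have hne : M (j + 1) ≠ M j := by
            intro heq
            exact hbot (by rw [← hstab j heq m, hbotm j])
          have hle : Nat.card (M (j+1)) ∣ Nat.card (M j) := AddSubgroup.card_dvd_of_le (hmono j)
          obtain ⟨t, htle, ht⟩ := (Nat.dvd_prime_pow hp).mp (ih hjn)
          obtain ⟨s, hsle, hs⟩ := (Nat.dvd_prime_pow hp).mp (hle.trans (ih hjn))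
          have hst : s ≤ t := by
            rw [← Nat.pow_dvd_pow_iff_le_right hp.one_lt, ← hs, ← ht]
            exact hle
          have hsne : s ≠ t := by
            intro h
            apply hne
            refine AddSubgroup.eq_of_le_of_card_ge (hmono j) ?_
            rw [hs, ht, h]
          have hslt : s + 1 ≤ t := Nat.succ_le_of_lt (lt_of_le_of_ne hst hsne)
          rw [hs]
          refine pow_dvd_pow p ?_
          omega
  have hn : M n = ⊥ := by
    have := hcard n le_rfl
    rw [Nat.sub_self, pow_zero, Nat.dvd_one] at this
    exact AddSubgroup.eq_bot_of_card_eq _ this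
  refine AddMonoidHom.ext fun x => ?_
  have : (δ ^ n) x ∈ M n := ⟨x, rfl⟩
  rw [hn, AddSubgroup.mem_bot] at this
  exact this


section Core

variable {N : Type*} [CommGroup N]

lemma lamE_congr {σ τ : Equiv.Perm N} (h : σ = τ) (hσ : σ ∈ Hol N) (hτ : τ ∈ Hol N) :
    lamE σ hσ = lamE τ hτ := by subst h; rfl

lemma pow_emb_eq_sum (σ : Equiv.Perm N) (hσ : σ ∈ Hol N) (m : ℕ) :
    Additive.ofMul ((σ ^ m) 1) = (∑ i ∈ range m, (lamE σ hσ) ^ i) (Additive.ofMul (σ 1)) := by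
  induction m with
  | zero => simp
  | succ m ih =>
    rw [geom_sum_succ]
    have h1 : (σ ^ (m+1)) 1 = σ ((σ ^ m) 1) := by rw [pow_succ']; rfl
    have h2 : (lamE σ hσ * ∑ i ∈ range m, lamE σ hσ ^ i + 1) (Additive.ofMul (σ 1))
        = lamE σ hσ ((∑ i ∈ range m, lamE σ hσ ^ i) (Additive.ofMul (σ 1)))
          + Additive.ofMul (σ 1) := rfl
    rw [h1, h2, ← ih, lamE_apply]
    show Additive.ofMul (σ ((σ ^ m) 1)) =
      Additive.ofMul ((σ 1)⁻¹ * σ (Additive.toMul (Additive.ofMul ((σ ^ m) 1))) * σ 1)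
    rw [toMul_ofMul]
    congr 1
    rw [mul_comm ((σ 1)⁻¹) (σ ((σ ^ m) 1)), inv_mul_cancel_right]

lemma hol_pow_fixed_iff {p n : ℕ} (hp : p.Prime) (hn1 : 1 ≤ n) (hpn : n < p)
    [Fintype N] (hN : Fintype.card N = p ^ n)
    {σ : Equiv.Perm N} (hσ : σ ∈ Hol N) (hord : σ ^ p ^ n = 1) (k : ℕ) :
    (σ ^ p ^ k) 1 = 1 ↔ (σ 1) ^ p ^ k = 1 := by
  rcases Nat.eq_zero_or_pos k with rfl | hk
  · simp
  classical
  set R := AddMonoid.End (Additive N) with hR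
  set lam : R := lamE σ hσ with hlam
  set δ : R := lam - 1 with hδdef
  have hδ1 : δ + 1 = lam := by rw [hδdef, sub_add_cancel]
  have he1 : 1 ≤ p ^ n := Nat.one_le_pow _ _ hp.pos
  have hlam_pow : lam ^ p ^ n = 1 := by
    rw [hlam, ← lamE_pow σ hσ, lamE_congr hord (Subgroup.pow_mem _ hσ (p ^ n)) (Subgroup.one_mem _),
      lamE_one]
  have hcast0 : ((p ^ n : ℕ) : R) = 0 := by
    refine AddMonoidHom.ext fun x => ?_
    show ((p ^ n : ℕ) : R) x = (0 : R) x
    rw [AddMonoid.End.natCast_apply, AddMonoid.End.zero_apply]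
    have hx : x.toMul ^ (p ^ n) = 1 := by rw [← hN]; exact pow_card_eq_one
    have hx2 : ((p ^ n) • x).toMul = (0 : Additive N).toMul := by
      rw [toMul_nsmul, hx]; rfl
    exact Additive.toMul.injective hx2
  -- δ is nilpotent
  have hnil : IsNilpotent δ := by
    have hbin : ∑ j ∈ range (p ^ n + 1), δ ^ j * ((p ^ n).choose j : R) = 1 := by
      have h := (Commute.one_right δ).add_pow (p ^ n)
      rw [hδ1, hlam_pow] at h
      simp only [one_pow, mul_one] at h
      exact h.symm
    rw [Finset.sum_range_succ' (fun j => δ ^ j * ((p ^ n).choose j : R)) (p ^ n)] at hbin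
    simp only [pow_zero, Nat.choose_zero_right, Nat.cast_one, mul_one, one_mul] at hbin
    have hbin2 : ∑ j ∈ range (p ^ n), δ ^ (j+1) * ((p ^ n).choose (j+1) : R) = 0 := by
      have h := congrArg (fun z => z - 1) hbin
      simpa using h
    rw [show p ^ n = (p ^ n - 1) + 1 by omega,
      Finset.sum_range_succ (fun j => δ ^ (j+1) * (((p ^ n - 1) + 1).choose (j+1) : R))
        (p ^ n - 1)] at hbin2
    rw [show (p ^ n - 1) + 1 = p ^ n by omega] at hbin2
    rw [Nat.choose_self, Nat.cast_one, mul_one] at hbin2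
    have hδe : δ ^ (p ^ n)
        = -∑ j ∈ range (p ^ n - 1), δ ^ (j+1) * ((p ^ n).choose (j+1) : R) := by
      rw [eq_neg_iff_add_eq_zero, add_comm]
      exact hbin2
    have hterm : ∀ j ∈ range (p ^ n - 1),
        δ ^ (j+1) * ((p ^ n).choose (j+1) : R)
          = (p : R) * (δ ^ (j+1) * (((p ^ n).choose (j+1) / p : ℕ) : R)) := by
      intro j hj
      rw [mem_range] at hj
      have hd : p ∣ (p ^ n).choose (j+1) :=
        hp.dvd_choose_pow (Nat.succ_ne_zero j) (by omega)
      have hc : ((p ^ n).choose (j+1) : R) = (p : R) * (((p ^ n).choose (j+1) / p : ℕ) : R) := by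
        rw [← Nat.cast_mul, Nat.mul_div_cancel' hd]
      rw [hc, ← mul_assoc, ← (Nat.cast_commute p (δ ^ (j+1))).eq, mul_assoc]
    rw [Finset.sum_congr rfl hterm, ← Finset.mul_sum] at hδe
    refine ⟨p ^ n * n, ?_⟩
    have hcomm := Nat.cast_commute (α := R) p (-(∑ j ∈ range (p ^ n - 1),
        δ ^ (j+1) * (((p ^ n).choose (j+1) / p : ℕ) : R)))
    rw [pow_mul, hδe, ← mul_neg, hcomm.mul_pow, ← Nat.cast_pow, hcast0, zero_mul]
  -- δ ^ n = 0
  have hδn : δ ^ n = 0 := by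
    refine nilpotent_index_le hp ?_ hnil
    rw [Nat.card_congr (Additive.toMul (α := N)), Nat.card_eq_fintype_card, hN]
  -- main formula
  have hnp : n ≤ p ^ k := le_trans (le_of_lt hpn) (Nat.le_self_pow (by omega) p)
  set U : R := ∑ j ∈ range n, (((p ^ k).choose (j+1) / p ^ k : ℕ) : R) * δ ^ j with hU
  have hdvd2 : ∀ j, j < n → p ^ k ∣ (p ^ k).choose (j+1) := by
    intro j hj
    have hpk1 : 1 ≤ p ^ k := Nat.one_le_pow _ _ hp.pos
    have hid := Nat.add_one_mul_choose_eq (p ^ k - 1) j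
    rw [show (p ^ k - 1) + 1 = p ^ k by omega] at hid
    have hcop : Nat.Coprime (p ^ k) (j + 1) := by
      refine Nat.Coprime.pow_left _ ?_
      refine (hp.coprime_iff_not_dvd).mpr ?_
      intro hdvd
      have := Nat.le_of_dvd (Nat.succ_pos j) hdvd
      omega
    exact hcop.dvd_of_dvd_mul_right ⟨(p ^ k - 1).choose j, hid.symm⟩
  have hgeom : (∑ i ∈ range (p ^ k), lam ^ i) = ((p ^ k : ℕ) : R) * U := by
    rw [← hδ1, geom_sum_eq_choose_sum δ (p ^ k),
      ← Finset.sum_range_add_sum_Ico (fun j => ((p ^ k).choose (j+1) : R) * δ ^ j) hnp]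
    have hz : ∑ j ∈ Finset.Ico n (p ^ k), ((p ^ k).choose (j+1) : R) * δ ^ j = 0 := by
      refine Finset.sum_eq_zero fun j hj => ?_
      rw [Finset.mem_Ico] at hj
      rw [show j = n + (j - n) by omega, pow_add, hδn, zero_mul, mul_zero]
    rw [hz, add_zero, hU, Finset.mul_sum]
    refine Finset.sum_congr rfl fun j hj => ?_
    rw [mem_range] at hj
    obtain ⟨c, hc⟩ := hdvd2 j hj
    rw [hc, Nat.mul_div_cancel_left _ (pow_pos hp.pos k), Nat.cast_mul, mul_assoc]
  set V : R := ∑ j ∈ range (n - 1), (((p ^ k).choose (j+1+1) / p ^ k : ℕ) : R) * δ ^ j with hV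
  have hsplitU : U = (∑ j ∈ range (n-1), (((p ^ k).choose (j+1+1) / p ^ k : ℕ) : R) * δ ^ (j+1))
      + (((p ^ k).choose (0+1) / p ^ k : ℕ) : R) * δ ^ 0 := by
    rw [hU, show n = (n-1)+1 by omega]
    exact Finset.sum_range_succ' _ (n-1)
  have hU1 : U = δ * V + 1 := by
    rw [hsplitU]
    have hf0 : (((p ^ k).choose (0+1) / p ^ k : ℕ) : R) * δ ^ 0 = 1 := by
      norm_num [Nat.div_self (pow_pos hp.pos k)]
    rw [hf0]
    congr 1
    rw [hV, Finset.mul_sum]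
    refine Finset.sum_congr rfl fun j hj => ?_
    rw [pow_succ', ← mul_assoc, (Nat.cast_commute ((p ^ k).choose (j+1+1) / p ^ k) δ).eq,
      mul_assoc]
  have hcommV : Commute δ V := by
    rw [hV]
    refine Commute.sum_right _ _ _ fun j hj => ?_
    exact Commute.mul_right (Nat.cast_commute _ δ).symm ((Commute.refl δ).pow_right j)
  have hunit : IsUnit U := by
    have hnilV : IsNilpotent (δ * V) := ⟨n, by rw [hcommV.mul_pow, hδn, zero_mul]⟩
    have h2 := (hnilV.neg).isUnit_one_sub
    rw [sub_neg_eq_add, add_comm] at h2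
    rwa [hU1]
  obtain ⟨u, hu⟩ := hunit
  have hmulinv : ((u⁻¹ : Rˣ) : R) * U = 1 := by rw [← hu]; exact u.inv_mul
  have happinv : ∀ z : Additive N, ((u⁻¹ : Rˣ) : R) (U z) = z := by
    intro z
    have h5 : (((u⁻¹ : Rˣ) : R) * U) z = z := by rw [hmulinv, AddMonoid.End.one_apply]
    exact h5
  have hinj : ∀ x y : Additive N, U x = U y → x = y := by
    intro x y hxy
    rw [← happinv x, ← happinv y, hxy]
  have hform : Additive.ofMul ((σ ^ p ^ k) 1) = U ((p ^ k) • Additive.ofMul (σ 1)) := by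
    rw [pow_emb_eq_sum σ hσ (p ^ k), ← hlam, hgeom]
    have h6 : (((p ^ k : ℕ) : R) * U) (Additive.ofMul (σ 1))
        = (p ^ k) • (U (Additive.ofMul (σ 1))) := by
      show ((p ^ k : ℕ) : R) (U (Additive.ofMul (σ 1))) = _
      rw [AddMonoid.End.natCast_apply]
    rw [h6, ← map_nsmul]
  constructor
  · intro h
    have h0 : U ((p ^ k) • Additive.ofMul (σ 1)) = U 0 := by
      rw [← hform, h, ofMul_one, map_zero]
    have h1 := hinj _ _ h0
    have h7 := congrArg Additive.toMul h1
    rwa [toMul_nsmul, toMul_ofMul, toMul_zero] at h7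
  · intro h
    have h1 : (p ^ k) • Additive.ofMul (σ 1) = 0 := by
      apply Additive.toMul.injective
      rw [toMul_nsmul, toMul_ofMul, toMul_zero, h]
    have h2 : Additive.ofMul ((σ ^ p ^ k) 1) = 0 := by rw [hform, h1, map_zero]
    have h8 := congrArg Additive.toMul h2
    rwa [toMul_ofMul, toMul_zero] at h8

end Core

section Count

lemma regular_count {p n : ℕ} (hp : p.Prime) (hn1 : 1 ≤ n) (hpn : n < p)
    {N : Type*} [CommGroup N] [Fintype N] (hN : Fintype.card N = p ^ n)
    {G : Subgroup (Equiv.Perm N)} (hG : G ≤ Hol N) (hreg : IsRegularSubgroup G) (k : ℕ) :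
    Nat.card {g : G // g ^ p ^ k = 1} = Nat.card {x : N // x ^ p ^ k = 1} := by
  obtain ⟨htrans, hfree⟩ := hreg
  have hinj : Function.Injective (fun g : G => (g : Equiv.Perm N) 1) := by
    intro g h hgh
    simp only at hgh
    have h1 : ((h⁻¹ * g : G) : Equiv.Perm N) 1 = 1 := by
      rw [Subgroup.coe_mul, Subgroup.coe_inv, Equiv.Perm.mul_apply, hgh,
        Equiv.Perm.inv_def, Equiv.symm_apply_apply]
    have h2 := hfree _ (h⁻¹ * g).2 1 h1
    have h3 : (h⁻¹ * g : G) = 1 := Subtype.ext h2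
    rwa [inv_mul_eq_one, eq_comm] at h3
  have hsurj : Function.Surjective (fun g : G => (g : Equiv.Perm N) 1) := by
    intro x
    obtain ⟨σ, hσG, hσx⟩ := htrans 1 x
    exact ⟨⟨σ, hσG⟩, hσx⟩
  have hcardG : Nat.card G = p ^ n := by
    rw [Nat.card_congr (Equiv.ofBijective _ ⟨hinj, hsurj⟩), Nat.card_eq_fintype_card, hN]
  have hordσ : ∀ g : G, (g : Equiv.Perm N) ^ p ^ n = 1 := by
    intro g
    have h4 : g ^ p ^ n = 1 := by rw [← hcardG]; exact pow_card_eq_one'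
    have h5 : ((g ^ p ^ n : G) : Equiv.Perm N) = 1 := by rw [h4]; rfl
    rwa [SubgroupClass.coe_pow] at h5
  have hiff : ∀ g : G, g ^ p ^ k = 1 ↔ ((g : Equiv.Perm N) 1) ^ p ^ k = 1 := by
    intro g
    rw [← hol_pow_fixed_iff hp hn1 hpn hN (hG g.2) (hordσ g) k]
    constructor
    · intro h
      rw [← SubgroupClass.coe_pow, h]
      rfl
    · intro h
      rw [← SubgroupClass.coe_pow] at h
      exact Subtype.ext (hfree _ (g ^ p ^ k).2 1 h)
  exact Nat.card_congr (Equiv.subtypeEquiv (Equiv.ofBijective _ ⟨hinj, hsurj⟩) hiff)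

lemma card_pow_eq_one_congr {G H : Type*} [Group G] [Group H] (φ : G ≃* H) (m : ℕ) :
    Nat.card {g : G // g ^ m = 1} = Nat.card {h : H // h ^ m = 1} :=
  Nat.card_congr (Equiv.subtypeEquiv φ.toEquiv (fun g =>
    ⟨fun h => by show (φ g) ^ m = 1; rw [← map_pow, h, map_one],
     fun h => φ.injective (by rw [map_pow, map_one]; exact h)⟩))

end Count

section Abelian

lemma zmod_torsion_card {p : ℕ} (hp : p.Prime) (e k : ℕ) :
    Nat.card {y : ZMod (p ^ e) // p ^ k • y = 0} = p ^ min e k := by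
  have hne : (p ^ e : ℕ) ≠ 0 := (pow_pos hp.pos e).ne'
  haveI : NeZero (p ^ e) := ⟨hne⟩
  set μ : ZMod (p ^ e) →+ ZMod (p ^ e) := AddMonoidHom.mk' (fun y => p ^ k • y)
      (fun a b => smul_add _ a b) with hμ
  have happ : ∀ y, μ y = ((p ^ k : ℕ) : ZMod (p ^ e)) * y := by
    intro y
    show p ^ k • y = _
    rw [nsmul_eq_mul]
  have hrange : μ.range = AddSubgroup.zmultiples ((p ^ k : ℕ) : ZMod (p ^ e)) := by
    ext z
    constructor
    · rintro ⟨y, rfl⟩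
      rw [happ]
      refine ⟨(y.val : ℤ), ?_⟩
      simp only [zsmul_eq_mul]
      push_cast [ZMod.natCast_val, ZMod.cast_id]
      ring
    · rintro ⟨m, rfl⟩
      refine ⟨m • 1, ?_⟩
      rw [happ]
      simp only [zsmul_eq_mul]
      push_cast
      ring
  have hker : Nat.card {y : ZMod (p ^ e) // p ^ k • y = 0} = Nat.card μ.ker := by
    refine Nat.card_congr (Equiv.subtypeEquivRight fun y => ?_)
    rw [AddMonoidHom.mem_ker]
    rfl
  have h1 := AddSubgroup.card_eq_card_quotient_mul_card_addSubgroup μ.ker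
  have h2 : Nat.card (ZMod (p ^ e) ⧸ μ.ker) = Nat.card μ.range :=
    Nat.card_congr (QuotientAddGroup.quotientKerEquivRange μ).toEquiv
  have hgcd : (p ^ e).gcd (p ^ k) = p ^ min e k := by
    rcases le_total e k with h | h
    · rw [min_eq_left h]; exact Nat.gcd_eq_left (pow_dvd_pow p h)
    · rw [min_eq_right h]; exact Nat.gcd_eq_right (pow_dvd_pow p h)
  have h3 : Nat.card μ.range = p ^ (e - min e k) := by
    rw [hrange, Nat.card_zmultiples, ZMod.addOrderOf_coe _ hne, hgcd,
      Nat.pow_div (min_le_left e k) hp.pos]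
  rw [h2, h3, Nat.card_zmod] at h1
  rw [hker]
  have hsum : p ^ (e - min e k) * p ^ min e k = p ^ e := by
    rw [← pow_add]
    congr 1
    omega
  refine Nat.eq_of_mul_eq_mul_left (pow_pos hp.pos (e - min e k)) ?_
  rw [← h1, hsum]

lemma pi_torsion_card {p : ℕ} (hp : p.Prime) {ι : Type} [Fintype ι] (e : ι → ℕ) (k : ℕ) :
    Nat.card {y : (i : ι) → ZMod (p ^ e i) // p ^ k • y = 0} = p ^ (∑ i, min (e i) k) := by
  have h1 : ∀ y : (i : ι) → ZMod (p ^ e i), (p ^ k • y = 0) ↔ ∀ i, p ^ k • y i = 0 := by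
    intro y
    rw [funext_iff]
    exact forall_congr' fun i => by rw [Pi.smul_apply, Pi.zero_apply]
  rw [Nat.card_congr (Equiv.subtypeEquivRight h1),
    Nat.card_congr (Equiv.subtypePiEquivPi (β := fun i => ZMod (p ^ e i))
      (p := fun i b => p ^ k • b = 0)),
    Nat.card_pi, Finset.prod_congr rfl (fun i _ => zmod_torsion_card hp (e i) k),
    Finset.prod_pow_eq_pow_sum]

lemma group_torsion_card {p : ℕ} (hp : p.Prime) {A : Type*} [AddCommGroup A]
    {ι : Type} [Fintype ι] (e : ι → ℕ) (f : A ≃+ ((i : ι) → ZMod (p ^ e i))) (k : ℕ) :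
    Nat.card {a : A // p ^ k • a = 0} = p ^ (∑ i, min (e i) k) := by
  rw [← pi_torsion_card hp e k]
  refine Nat.card_congr (Equiv.subtypeEquiv f.toEquiv fun a => ?_)
  constructor
  · intro h
    show p ^ k • f a = 0
    rw [← map_nsmul, h, map_zero]
  · intro h
    refine f.injective ?_
    rw [map_nsmul, map_zero]
    exact h

/-- Cast between `ZMod`s. -/
def zmodCast {a b : ℕ} (h : a = b) : ZMod a ≃+ ZMod b := by subst h; exact AddEquiv.refl _

noncomputable def piZModCongr {ι κ : Type} (σ : ι ≃ κ) (e₁ : ι → ℕ) (e₂ : κ → ℕ)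
    (h : ∀ i, e₂ (σ i) = e₁ i) : ((i : ι) → ZMod (e₁ i)) ≃+ ((j : κ) → ZMod (e₂ j)) :=
  AddEquiv.mk (Equiv.piCongr σ (fun i => (zmodCast (h i).symm).toEquiv)) <| by
    intro x y
    funext j
    obtain ⟨i, rfl⟩ := σ.surjective j
    simp only [Equiv.toFun_as_coe, Pi.add_apply, Equiv.piCongr_apply_apply,
      AddEquiv.toEquiv_eq_coe, AddEquiv.coe_toEquiv, EquivLike.coe_coe, map_add]

lemma exists_decomp {p n : ℕ} (hp : p.Prime) {A : Type*} [AddCommGroup A] [Fintype A]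
    (hA : Fintype.card A = p ^ n) :
    ∃ (ι : Type) (_ : Fintype ι) (e : ι → ℕ), (∀ i, 1 ≤ e i) ∧
      Nonempty (A ≃+ ((i : ι) → ZMod (p ^ e i))) := by
  obtain ⟨ι, hfin, m, hm1, ⟨f⟩⟩ := AddCommGroup.equiv_directSum_zmod_of_finite' A
  haveI := hfin
  let g : A ≃+ ((i : ι) → ZMod (m i)) := f.trans (DirectSum.addEquivProd _)
  have hcard : ∏ i, m i = p ^ n := by
    have hc := Nat.card_congr g.toEquiv
    rw [Nat.card_eq_fintype_card, hA, Nat.card_pi] at hc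
    simp only [Nat.card_zmod] at hc
    exact hc.symm
  have hex : ∀ i, ∃ t, m i = p ^ t := by
    intro i
    have hdvd : m i ∣ p ^ n := hcard ▸ Finset.dvd_prod_of_mem m (Finset.mem_univ i)
    obtain ⟨t, _, hmt⟩ := (Nat.dvd_prime_pow hp).mp hdvd
    exact ⟨t, hmt⟩
  choose e he using hex
  refine ⟨ι, hfin, e, fun i => ?_, ⟨g.trans (piZModCongr (Equiv.refl ι) m (fun i => p ^ e i)
    (fun i => (he i).symm))⟩⟩
  by_contra hcon
  push_neg at hcon
  have h2 := hm1 i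
  rw [he i, Nat.lt_one_iff.mp hcon, pow_zero] at h2
  omega

lemma exists_matching {ι₁ ι₂ : Type} [Fintype ι₁] [Fintype ι₂] (e₁ : ι₁ → ℕ) (e₂ : ι₂ → ℕ)
    (h : ∀ v, Nat.card {i : ι₁ // e₁ i = v} = Nat.card {j : ι₂ // e₂ j = v}) :
    ∃ σ : ι₁ ≃ ι₂, ∀ i, e₂ (σ i) = e₁ i := by
  classical
  have τ : ∀ v : ℕ, {i : ι₁ // e₁ i = v} ≃ {j : ι₂ // e₂ j = v} := by
    intro v
    apply Fintype.equivOfCardEq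
    rw [← Nat.card_eq_fintype_card, ← Nat.card_eq_fintype_card]
    exact h v
  refine ⟨(Equiv.sigmaFiberEquiv e₁).symm.trans
    ((Equiv.sigmaCongrRight τ).trans (Equiv.sigmaFiberEquiv e₂)), ?_⟩
  intro i
  exact (τ (e₁ i) ⟨i, rfl⟩).2

lemma fiber_counts_eq {p : ℕ} (hp : 1 < p) {ι₁ ι₂ : Type} [Fintype ι₁] [Fintype ι₂]
    (e₁ : ι₁ → ℕ) (e₂ : ι₂ → ℕ) (h1 : ∀ i, 1 ≤ e₁ i) (h2 : ∀ j, 1 ≤ e₂ j)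
    (hS : ∀ k, ∑ i, min (e₁ i) k = ∑ j, min (e₂ j) k) :
    ∀ v, Nat.card {i : ι₁ // e₁ i = v} = Nat.card {j : ι₂ // e₂ j = v} := by
  classical
  have lemA : ∀ {ι : Type} [Fintype ι] (e : ι → ℕ) (v : ℕ),
      ∑ i, min (e i) (v+1) = ∑ i, min (e i) v
        + (Finset.univ.filter (fun i => v+1 ≤ e i)).card := by
    intro ι _ e v
    rw [Finset.card_filter, ← Finset.sum_add_distrib]
    refine Finset.sum_congr rfl fun i _ => ?_
    split <;> omega
  have lemB : ∀ {ι : Type} [Fintype ι] (e : ι → ℕ) (v : ℕ),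
      (Finset.univ.filter (fun i => v+1 ≤ e i)).card
        = (Finset.univ.filter (fun i => e i = v+1)).card
          + (Finset.univ.filter (fun i => v+1+1 ≤ e i)).card := by
    intro ι _ e v
    rw [Finset.card_filter, Finset.card_filter, Finset.card_filter, ← Finset.sum_add_distrib]
    refine Finset.sum_congr rfl fun i _ => ?_
    split <;> split <;> split <;> omega
  have hcge : ∀ v, (Finset.univ.filter (fun i => v+1 ≤ e₁ i)).card
      = (Finset.univ.filter (fun j => v+1 ≤ e₂ j)).card := by
    intro v
    have hA1 := lemA e₁ v
    have hA2 := lemA e₂ v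
    rw [hS v, hS (v+1)] at hA1
    omega
  intro v
  simp only [Nat.card_eq_fintype_card, Fintype.card_subtype]
  rcases v with _ | v
  · rw [Finset.filter_false_of_mem (fun i _ => by have := h1 i; omega),
      Finset.filter_false_of_mem (fun j _ => by have := h2 j; omega)]
    simp
  · have hB1 := lemB e₁ v
    have hB2 := lemB e₂ v
    have hc1 := hcge v
    have hc2 := hcge (v+1)
    omega

lemma abelian_iso_of_counts {p n : ℕ} (hp : p.Prime) {A B : Type*} [AddCommGroup A]
    [AddCommGroup B] [Fintype A] [Fintype B]
    (hA : Fintype.card A = p ^ n) (hB : Fintype.card B = p ^ n)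
    (hcount : ∀ k, Nat.card {a : A // p ^ k • a = 0} = Nat.card {b : B // p ^ k • b = 0}) :
    Nonempty (A ≃+ B) := by
  obtain ⟨ι₁, hι₁, e₁, he₁, ⟨f₁⟩⟩ := exists_decomp hp hA
  obtain ⟨ι₂, hι₂, e₂, he₂, ⟨f₂⟩⟩ := exists_decomp hp hB
  haveI := hι₁; haveI := hι₂
  have hS : ∀ k, ∑ i, min (e₁ i) k = ∑ j, min (e₂ j) k := by
    intro k
    have h1 := group_torsion_card hp e₁ f₁ k
    have h2 := group_torsion_card hp e₂ f₂ k
    have h3 := hcount k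
    rw [h1, h2] at h3
    exact Nat.pow_right_injective hp.two_le h3
  obtain ⟨σ, hσ⟩ := exists_matching e₁ e₂ (fiber_counts_eq hp.one_lt e₁ e₂ he₁ he₂ hS)
  exact ⟨f₁.trans ((piZModCongr σ _ _ (fun i => by rw [hσ i])).trans f₂.symm)⟩

end Abelian

lemma additive_torsion_bridge {N : Type*} [CommGroup N] [Fintype N] (p k : ℕ) :
    Nat.card {a : Additive N // p ^ k • a = 0} = Nat.card {x : N // x ^ p ^ k = 1} := by
  refine Nat.card_congr (Equiv.subtypeEquiv Additive.toMul fun a => ?_)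
  constructor
  · intro h
    show a.toMul ^ p ^ k = 1
    rw [← toMul_nsmul, h, toMul_zero]
  · intro h
    apply Additive.toMul.injective
    rw [toMul_nsmul, toMul_zero]
    exact h

theorem braces_additive_group_determined {p n : ℕ} (hp : p.Prime) (hn : 3 ≤ n)
    (hpn : p > n)
    {N₁ N₂ : Type*} [CommGroup N₁] [CommGroup N₂] [Fintype N₁] [Fintype N₂]
    (hN₁ : Fintype.card N₁ = p ^ n) (hN₂ : Fintype.card N₂ = p ^ n)
    (G₁ : Subgroup (Equiv.Perm N₁)) (hG₁ : G₁ ≤ Hol N₁) (hreg₁ : IsRegularSubgroup G₁)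
    (G₂ : Subgroup (Equiv.Perm N₂)) (hG₂ : G₂ ≤ Hol N₂) (hreg₂ : IsRegularSubgroup G₂)
    (hiso : Nonempty (G₁ ≃* G₂)) :
    Nonempty (N₁ ≃* N₂) := by
  obtain ⟨φ⟩ := hiso
  have hn1 : 1 ≤ n := by omega
  have hcount : ∀ k, Nat.card {x : N₁ // x ^ p ^ k = 1} = Nat.card {x : N₂ // x ^ p ^ k = 1} := by
    intro k
    rw [← regular_count hp hn1 hpn hN₁ hG₁ hreg₁ k, ← regular_count hp hn1 hpn hN₂ hG₂ hreg₂ k]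
    exact card_pow_eq_one_congr φ (p ^ k)
  have hcount' : ∀ k, Nat.card {a : Additive N₁ // p ^ k • a = 0}
      = Nat.card {a : Additive N₂ // p ^ k • a = 0} := by
    intro k
    rw [additive_torsion_bridge p k, additive_torsion_bridge p k]
    exact hcount k
  have hA : Fintype.card (Additive N₁) = p ^ n := by
    rw [← hN₁]
    exact Fintype.card_congr Additive.toMul
  have hB : Fintype.card (Additive N₂) = p ^ n := by
    rw [← hN₂]
    exact Fintype.card_congr Additive.toMul
  obtain ⟨ψ⟩ := abelian_iso_of_counts hp hA hB hcount'
  exact ⟨MulEquiv.toAdditive.symm ψ⟩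
end

section
/- Let p be a prime and n ≥ 1 with p > n. Let N be an abelian group of order p^n with identity e_N and let G be a regular subgroup of the holomorph Hol(N) ≤ Perm(N). Then the map G → N sending σ to σ(e_N) is a bijection that preserves the order of elements, i.e. ord(σ) = ord(σ(e_N)) for every σ ∈ G. -/
section Auxiliary

/-- Key identity: an element of the holomorph is an affine map `x ↦ σ 1 * f x`
with `f` an automorphism.  Equivalently, `σ (x*y) = σ x * (σ 1)⁻¹ * σ y`. -/
lemma hol_key {N : Type*} [Group N] {σ : Equiv.Perm N} (h : σ ∈ Hol N) (x y : N) :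
    σ (x * y) = σ x * (σ 1)⁻¹ * σ y := by
  rw [Hol, Subgroup.mem_normalizer_iff] at h
  obtain ⟨z, hz⟩ := (h (MulAction.toPermHom N N x)).mp ⟨x, rfl⟩
  have hz' : ∀ w, z * w = σ (x * σ⁻¹ w) := by
    intro w
    have := congrArg (fun π : Equiv.Perm N => π w) hz
    simpa [MulAction.toPermHom, Equiv.Perm.mul_apply] using this
  have h1 : z * σ 1 = σ x := by
    have := hz' (σ 1)
    simpa using this
  have h2 : z * σ y = σ (x * y) := by
    have := hz' (σ y)
    simpa using this
  rw [← h2, ← h1]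
  group

/-- A nontrivial finite abelian `p`-group admits a nonzero fixed point under any
automorphism of `p`-power order. -/
lemma exists_fixed_ne_zero {p : ℕ} (hp : p.Prime) {A : Type*} [AddCommGroup A] [Finite A]
    (hcard : p ∣ Nat.card A) (ψ : (AddMonoid.End A)ˣ) {k : ℕ} (hψ : ψ ^ p ^ k = 1) :
    ∃ x : A, x ≠ 0 ∧ (ψ : AddMonoid.End A) x = x := by
  haveI : Fact p.Prime := ⟨hp⟩
  set G := Subgroup.zpowers ψ
  have hpG : IsPGroup p G := by
    intro g
    refine ⟨k, ?_⟩
    obtain ⟨m, hm⟩ := g.2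
    have : (g : (AddMonoid.End A)ˣ) ^ p ^ k = 1 := by
      rw [← hm, ← zpow_natCast, ← zpow_mul, mul_comm, zpow_mul, zpow_natCast, hψ, one_zpow]
    ext1
    push_cast
    simpa using this
  have hmod := IsPGroup.card_modEq_card_fixedPoints hpG A
  have hzero : (0 : A) ∈ MulAction.fixedPoints G A := by
    intro g
    exact smul_zero _
  have hdvd : p ∣ Nat.card (MulAction.fixedPoints G A) :=
    (Nat.modEq_zero_iff_dvd).mp ((hmod.symm.trans ((Nat.modEq_zero_iff_dvd).mpr hcard)))
  have hpos : 0 < Nat.card (MulAction.fixedPoints G A) :=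
    Nat.card_pos_iff.mpr ⟨⟨⟨0, hzero⟩⟩, inferInstance⟩
  have h2 : 1 < Nat.card (MulAction.fixedPoints G A) := by
    rcases hdvd with ⟨c, hc⟩
    have hc1 : 1 ≤ c := by
      rcases Nat.eq_zero_or_pos c with h | h
      · rw [h, Nat.mul_zero] at hc; omega
      · exact h
    calc 1 < p := hp.one_lt
    _ ≤ p * c := Nat.le_mul_of_pos_right _ (by omega)
    _ = _ := hc.symm
  haveI : Nontrivial (MulAction.fixedPoints G A) := Finite.one_lt_card_iff_nontrivial.mp h2
  obtain ⟨x, hxne⟩ := exists_ne (⟨0, hzero⟩ : MulAction.fixedPoints G A)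
  refine ⟨x, ?_, ?_⟩
  · intro h0
    exact hxne (Subtype.ext h0)
  · have := x.2 (⟨ψ, Subgroup.mem_zpowers ψ⟩ : G)
    exact this

/-- An endomorphism of `p`-power order of a finite abelian group of order dividing `p ^ m`
is unipotent: `(φ - 1) ^ m = 0`. -/
lemma end_sub_one_pow_eq_zero {p : ℕ} (hp : p.Prime) :
    ∀ (m : ℕ) (A : Type u) [AddCommGroup A] [Finite A], Nat.card A ∣ p ^ m →
      ∀ (φ : AddMonoid.End A) (k : ℕ), φ ^ p ^ k = 1 → (φ - 1) ^ m = 0 := by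
  intro m
  induction m with
  | zero =>
    intro A _ _ hA φ k hφ
    have h1 : Nat.card A = 1 := Nat.dvd_one.mp (by simpa using hA)
    haveI : Subsingleton A := (Nat.card_eq_one_iff_unique.mp h1).1
    refine AddMonoidHom.ext fun x => ?_
    exact Subsingleton.elim _ _
  | succ m ih =>
    intro A _ _ hA φ k hφ
    have hpk1 : 1 ≤ p ^ k := Nat.one_le_pow _ _ hp.pos
    have hbij : Function.Bijective φ := by
      have h1 : ∀ x, φ ((φ ^ (p ^ k - 1)) x) = x := by
        intro x
        have : (φ * φ ^ (p ^ k - 1)) x = x := by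
          rw [← pow_succ', Nat.sub_add_cancel hpk1, hφ]
          rfl
        simpa using this
      have h2 : ∀ x, (φ ^ (p ^ k - 1)) (φ x) = x := by
        intro x
        have : (φ ^ (p ^ k - 1) * φ) x = x := by
          rw [← pow_succ, Nat.sub_add_cancel hpk1, hφ]
          rfl
        simpa using this
      exact ⟨Function.LeftInverse.injective h2, fun x => ⟨_, h1 x⟩⟩
    by_cases htriv : Subsingleton A
    · refine AddMonoidHom.ext fun x => ?_
      exact Subsingleton.elim _ _
    · haveI hnt : Nontrivial A := not_subsingleton_iff_nontrivial.mp htriv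
      have hcA : p ∣ Nat.card A := by
        obtain ⟨j, hj, hAj⟩ := (Nat.dvd_prime_pow hp).mp hA
        have h1 : 1 < Nat.card A := Finite.one_lt_card_iff_nontrivial.mpr hnt
        match j, hAj with
        | 0, hAj => rw [pow_zero] at hAj; omega
        | j + 1, hAj => exact hAj ▸ dvd_pow_self p (Nat.succ_ne_zero j)
      set ψ : (AddMonoid.End A)ˣ := Units.ofPowEqOne φ (p ^ k) hφ (by omega) with hψdef
      have hψapp : ∀ x, (ψ : AddMonoid.End A) x = φ x := fun x => rfl
      have hψpow : ∀ (j : ℕ) (x : A), ((ψ ^ j : (AddMonoid.End A)ˣ) : AddMonoid.End A) x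
          = (φ ^ j) x := by
        intro j
        induction j with
        | zero => intro x; rfl
        | succ j ihj =>
          intro x
          rw [pow_succ', pow_succ']
          show (ψ : AddMonoid.End A) (((ψ ^ j : (AddMonoid.End A)ˣ) : AddMonoid.End A) x)
            = φ ((φ ^ j) x)
          rw [ihj, hψapp]
      have hψ1 : ψ ^ p ^ k = 1 := Units.pow_ofPowEqOne hφ (by omega)
      obtain ⟨x₀, hx0ne, hx0⟩ := exists_fixed_ne_zero hp hcA ψ hψ1
      set u : AddMonoid.End A := φ - 1 with hudef
      have hux : ∀ x, u x = φ x - x := fun x => rfl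
      have hx0ker : x₀ ∈ u.ker := by
        show u x₀ = 0
        rw [hux, ← hψapp, hx0, sub_self]
      have hkernt : Nontrivial u.ker :=
        ⟨⟨x₀, hx0ker⟩, 0, by simp [Subtype.ext_iff, hx0ne]⟩
      have hcard_eq : Nat.card A = Nat.card (A ⧸ u.ker) * Nat.card u.ker :=
        AddSubgroup.card_eq_card_quotient_mul_card_addSubgroup _
      have hquot : Nat.card (A ⧸ u.ker) = Nat.card u.range :=
        Nat.card_congr (QuotientAddGroup.quotientKerEquivRange u).toEquiv
      have hpker : p ∣ Nat.card u.ker := by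
        have hdvd : Nat.card u.ker ∣ p ^ (m + 1) :=
          dvd_trans (AddSubgroup.card_addSubgroup_dvd_card _) hA
        obtain ⟨j, hj, hj'⟩ := (Nat.dvd_prime_pow hp).mp hdvd
        have h1 : 1 < Nat.card u.ker := Finite.one_lt_card_iff_nontrivial.mpr hkernt
        match j, hj' with
        | 0, hj' => rw [pow_zero] at hj'; omega
        | j + 1, hj' => exact hj' ▸ dvd_pow_self p (Nat.succ_ne_zero j)
      have hrange : Nat.card u.range ∣ p ^ m := by
        obtain ⟨c, hc⟩ := hpker
        have hstep : Nat.card u.range * p ∣ p ^ m * p := by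
          rw [← pow_succ]
          refine dvd_trans ⟨c, ?_⟩ hA
          rw [hcard_eq, hquot, hc]
          ring
        exact (Nat.mul_dvd_mul_iff_right hp.pos).mp hstep
      have hcommu : ∀ x, φ (u x) = u (φ x) := by
        intro x
        rw [hux, hux, map_sub]
      have hmem : ∀ y : u.range, φ (y : A) ∈ u.range := by
        rintro ⟨y, x, rfl⟩
        exact ⟨φ x, (hcommu x).symm⟩
      set K := u.range with hKdef
      set φK : AddMonoid.End K :=
        AddMonoidHom.codRestrict (φ.comp K.subtype) K (fun y => hmem y) with hφKdef
      have hφKapp : ∀ y : K, (φK y : A) = φ (y : A) := fun y => rfl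
      have hφKpow : ∀ (j : ℕ) (y : K), ((φK ^ j) y : A) = (φ ^ j) (y : A) := by
        intro j
        induction j with
        | zero => intro y; rfl
        | succ j ihj =>
          intro y
          rw [pow_succ', pow_succ']
          show ((φK ((φK ^ j) y) : K) : A) = φ ((φ ^ j) (y : A))
          rw [hφKapp, ihj]
      have hφK1 : φK ^ p ^ k = 1 := by
        refine AddMonoidHom.ext fun y => ?_
        have h := hφKpow (p ^ k) y
        rw [hφ] at h
        exact Subtype.ext h
      have hres : (φK - 1) ^ m = 0 := ih K hrange φK k hφK1
      have hsub1 : ∀ y : K, (((φK - 1) y : K) : A) = (φ - 1) (y : A) := by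
        intro y
        show ((φK y - y : K) : A) = φ (y : A) - (y : A)
        rw [AddSubgroup.coe_sub, hφKapp]
      have hsubpow : ∀ (j : ℕ) (y : K), (((φK - 1) ^ j) y : A) = ((φ - 1) ^ j) (y : A) := by
        intro j
        induction j with
        | zero => intro y; rfl
        | succ j ihj =>
          intro y
          rw [pow_succ', pow_succ']
          show (((φK - 1) (((φK - 1) ^ j) y) : K) : A) = (φ - 1) (((φ - 1) ^ j) (y : A))
          rw [hsub1, ihj]
      refine AddMonoidHom.ext fun x => ?_
      rw [pow_succ]
      have hx : u x ∈ K := ⟨x, rfl⟩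
      have h2 := hsubpow m ⟨u x, hx⟩
      rw [hres] at h2
      show ((φ - 1) ^ m) (u x) = 0
      rw [← h2]
      rfl

lemma pk_dvd_choose {p k j : ℕ} (hp : p.Prime) (hj : j + 1 < p) :
    p ^ k ∣ (p ^ k).choose (j + 1) := by
  have h1 : 1 ≤ p ^ k := Nat.one_le_pow _ _ hp.pos
  have key : p ^ k * (p ^ k - 1).choose j = (p ^ k).choose (j + 1) * (j + 1) := by
    have h := Nat.add_one_mul_choose_eq (p ^ k - 1) j
    rwa [Nat.sub_add_cancel h1] at h
  have hcop : (p ^ k).Coprime (j + 1) :=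
    Nat.Coprime.pow_left _ ((Nat.Prime.coprime_iff_not_dvd hp).mpr
      (Nat.not_dvd_of_pos_of_lt (Nat.succ_pos j) hj))
  exact hcop.dvd_of_dvd_mul_right ⟨_, key.symm⟩

/-- Hockey-stick style expansion of a geometric sum in terms of binomial coefficients. -/
lemma geom_sum_one_add {R : Type*} [Ring R] (u : R) :
    ∀ m : ℕ, ∑ i ∈ Finset.range m, (1 + u) ^ i
      = ∑ j ∈ Finset.range m, m.choose (j + 1) • u ^ j := by
  intro m
  induction m with
  | zero => simp
  | succ m ih =>
    rw [Finset.sum_range_succ, ih]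
    have hb : (1 + u) ^ m = ∑ j ∈ Finset.range (m + 1), m.choose j • u ^ j := by
      rw [add_comm, Commute.add_pow (Commute.one_right u) m]
      refine Finset.sum_congr rfl fun j hj => ?_
      rw [one_pow, mul_one, nsmul_eq_mul, (Nat.cast_commute (m.choose j) (u ^ j)).eq]
    have hsplit : ∀ j, (m + 1).choose (j + 1) • u ^ j
        = m.choose (j + 1) • u ^ j + m.choose j • u ^ j := by
      intro j
      rw [Nat.choose_succ_succ, add_smul, add_comm]
    rw [hb, Finset.sum_congr rfl (fun j _ => hsplit j), Finset.sum_add_distrib]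
    have hC : ∑ j ∈ Finset.range (m + 1), m.choose (j + 1) • u ^ j
        = ∑ j ∈ Finset.range m, m.choose (j + 1) • u ^ j := by
      rw [Finset.sum_range_succ, Nat.choose_succ_self, zero_smul, add_zero]
    rw [hC]

/-- The crucial computation: if `u ^ n = 0` with `n < p`, then the geometric sum
`1 + (1+u) + ⋯ + (1+u)^(p^k - 1)` equals `p ^ k • E` for a (left-)invertible `E`. -/
lemma crux {R : Type*} [Ring R] {p n : ℕ} (hp : p.Prime) (hn : 1 ≤ n) (hpn : n < p)
    {u : R} (hu : u ^ n = 0) {k : ℕ} (hk : 1 ≤ k) :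
    ∃ E E' : R, E' * E = 1 ∧ ∑ i ∈ Finset.range (p ^ k), (1 + u) ^ i = p ^ k • E := by
  classical
  set c : ℕ → ℕ := fun j => (p ^ k).choose (j + 1) / p ^ k with hc
  have hcmul : ∀ j, j < n → p ^ k * c j = (p ^ k).choose (j + 1) := by
    intro j hj
    exact Nat.mul_div_cancel' (pk_dvd_choose hp (by omega))
  have hc0 : c 0 = 1 := by
    have h01 : (p ^ k).choose (0 + 1) = p ^ k := by rw [Nat.zero_add, Nat.choose_one_right]
    simp only [hc, h01]
    exact Nat.div_self (Nat.one_le_pow _ _ hp.pos)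
  set E : R := ∑ j ∈ Finset.range n, c j • u ^ j with hE
  set V : R := ∑ j ∈ Finset.range (n - 1), c (j + 1) • u ^ j with hV
  have hEV : E = 1 + u * V := by
    rw [hE, hV]
    obtain ⟨n', rfl⟩ : ∃ n', n = n' + 1 := ⟨n - 1, by omega⟩
    rw [Finset.sum_range_succ']
    simp only [Nat.add_sub_cancel]
    rw [hc0, one_smul, pow_zero, Finset.mul_sum]
    rw [add_comm]
    congr 1
    refine Finset.sum_congr rfl fun j hj => ?_
    rw [mul_smul_comm, ← pow_succ']
  have hcomm : Commute u V := by
    refine Commute.sum_right _ _ _ fun j hj => ?_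
    rw [nsmul_eq_mul]
    exact ((Nat.cast_commute (c (j + 1)) u).symm).mul_right ((Commute.refl u).pow_right j)
  have hnil : IsNilpotent (u * V) := by
    refine ⟨n, ?_⟩
    rw [hcomm.mul_pow, hu, zero_mul]
  have hunit : IsUnit E := by
    rw [hEV]
    exact IsNilpotent.isUnit_one_add hnil
  obtain ⟨e, he⟩ := hunit
  refine ⟨E, ↑e⁻¹, by rw [← he, Units.inv_mul], ?_⟩
  have hnpk : n ≤ p ^ k := by
    calc n ≤ p := hpn.le
    _ = p ^ 1 := (pow_one p).symm
    _ ≤ p ^ k := Nat.pow_le_pow_right hp.pos hk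
  rw [geom_sum_one_add]
  have hsplit : ∑ j ∈ Finset.range (p ^ k), (p ^ k).choose (j + 1) • u ^ j
      = ∑ j ∈ Finset.range n, (p ^ k).choose (j + 1) • u ^ j
        + ∑ j ∈ Finset.Ico n (p ^ k), (p ^ k).choose (j + 1) • u ^ j := by
    rw [Finset.range_eq_Ico, ← Finset.sum_Ico_consecutive _ (Nat.zero_le n) hnpk, ← Finset.range_eq_Ico]
  rw [hsplit]
  have hzero : ∑ j ∈ Finset.Ico n (p ^ k), (p ^ k).choose (j + 1) • u ^ j = 0 := by
    refine Finset.sum_eq_zero fun j hj => ?_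
    have hj' : n ≤ j := (Finset.mem_Ico.mp hj).1
    rw [pow_eq_zero_of_le hj' hu, smul_zero]
  rw [hzero, add_zero, hE, Finset.smul_sum]
  refine Finset.sum_congr rfl fun j hj => ?_
  rw [← hcmul j (Finset.mem_range.mp hj), mul_smul]

end Auxiliary

theorem eval_one_bijective_orderOf {p n : ℕ} (hp : p.Prime) (hn : 1 ≤ n) (hpn : p > n)
    {N : Type*} [CommGroup N] [Fintype N] (hN : Fintype.card N = p ^ n)
    (G : Subgroup (Equiv.Perm N)) (hG : G ≤ Hol N) (hreg : IsRegularSubgroup G) :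
    Function.Bijective (fun σ : G => (σ : Equiv.Perm N) 1) ∧
      ∀ σ : G, orderOf σ = orderOf ((σ : Equiv.Perm N) 1) := by
  classical
  have hkey : ∀ σ : G, ∀ x y : N, (σ : Equiv.Perm N) (x * y)
      = (σ : Equiv.Perm N) x * ((σ : Equiv.Perm N) 1)⁻¹ * (σ : Equiv.Perm N) y :=
    fun σ x y => hol_key (hG σ.2) x y
  have hinj : Function.Injective (fun σ : G => (σ : Equiv.Perm N) 1) := by
    intro σ τ h
    simp only at h
    have hfix : ((τ * σ⁻¹ : G) : Equiv.Perm N) ((σ : Equiv.Perm N) 1) = (σ : Equiv.Perm N) 1 := by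
      rw [Subgroup.coe_mul, Equiv.Perm.mul_apply, Subgroup.coe_inv, Equiv.Perm.inv_def, Equiv.symm_apply_apply]
      exact h.symm
    have h1 := hreg.2 _ (τ * σ⁻¹ : G).2 _ hfix
    have h2 : (τ * σ⁻¹ : G) = 1 := by
      apply_fun (Subtype.val) using Subtype.val_injective
      exact h1
    exact (mul_inv_eq_one.mp h2).symm
  have hsurj : Function.Surjective (fun σ : G => (σ : Equiv.Perm N) 1) := by
    intro y
    obtain ⟨σ, hσ, h⟩ := hreg.1 1 y
    exact ⟨⟨σ, hσ⟩, h⟩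
  refine ⟨⟨hinj, hsurj⟩, ?_⟩
  have hcardG : Nat.card G = p ^ n := by
    rw [Nat.card_eq_of_bijective _ ⟨hinj, hsurj⟩, Nat.card_eq_fintype_card, hN]
  intro σ
  set a : N := (σ : Equiv.Perm N) 1 with ha
  set f : N → N := fun x => a⁻¹ * (σ : Equiv.Perm N) x with hf
  have hfa : ∀ x, (σ : Equiv.Perm N) x = a * f x := by
    intro x
    rw [hf]
    group
  have hfmul : ∀ x y, f (x * y) = f x * f y := by
    intro x y
    simp only [hf]
    rw [hkey σ x y, ← ha]
    group
  set φ : AddMonoid.End (Additive N) :=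
    AddMonoidHom.mk' (fun x => Additive.ofMul (f x.toMul)) (by
      intro x y
      simp only [toMul_add, hfmul, ofMul_mul]) with hφ
  have hφapp : ∀ x : N, φ (Additive.ofMul x) = Additive.ofMul (f x) := fun x => rfl
  have hS1 : ∀ k : ℕ, ((σ ^ (k + 1) : G) : Equiv.Perm N) 1
      = a * f (((σ ^ k : G) : Equiv.Perm N) 1) := by
    intro k
    rw [pow_succ', Subgroup.coe_mul, Equiv.Perm.mul_apply, hfa]
  have hSx : ∀ (k : ℕ) (x : N), ((σ ^ k : G) : Equiv.Perm N) x
      = ((σ ^ k : G) : Equiv.Perm N) 1 * f^[k] x := by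
    intro k
    induction k with
    | zero => intro x; simp
    | succ k ih =>
      intro x
      have e1 : ((σ ^ (k + 1) : G) : Equiv.Perm N) x
          = a * f (((σ ^ k : G) : Equiv.Perm N) x) := by
        rw [pow_succ', Subgroup.coe_mul, Equiv.Perm.mul_apply, hfa]
      rw [e1, ih x, hfmul, hS1 k, Function.iterate_succ_apply']
      exact (mul_assoc _ _ _).symm
  have hφpowiter : ∀ (k : ℕ) (x : N), (φ ^ k) (Additive.ofMul x) = Additive.ofMul (f^[k] x) := by
    intro k
    induction k with
    | zero => intro x; rfl
    | succ k ihk =>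
      intro x
      rw [pow_succ, Function.iterate_succ_apply]
      show (φ ^ k) (φ (Additive.ofMul x)) = _
      rw [hφapp, ihk (f x)]
  have hgeom : ∀ k : ℕ, Additive.ofMul (((σ ^ k : G) : Equiv.Perm N) 1)
      = (∑ i ∈ Finset.range k, φ ^ i) (Additive.ofMul a) := by
    intro k
    induction k with
    | zero => simp
    | succ k ih =>
      rw [hS1 k, geom_sum_succ, ofMul_mul, ← hφapp, ih]
      show Additive.ofMul a + φ ((∑ i ∈ Finset.range k, φ ^ i) (Additive.ofMul a))
          = (φ * ∑ i ∈ Finset.range k, φ ^ i + 1) (Additive.ofMul a)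
      show _ = (φ * ∑ i ∈ Finset.range k, φ ^ i) (Additive.ofMul a)
          + (1 : AddMonoid.End (Additive N)) (Additive.ofMul a)
      show _ = φ ((∑ i ∈ Finset.range k, φ ^ i) (Additive.ofMul a)) + Additive.ofMul a
      rw [add_comm]
  have hσdvd : orderOf σ ∣ p ^ n := hcardG ▸ orderOf_dvd_natCard σ
  have hσpn : σ ^ p ^ n = 1 := orderOf_dvd_iff_pow_eq_one.mp hσdvd
  have hfiter : ∀ x, f^[p ^ n] x = x := by
    intro x
    have h1 := hSx (p ^ n) x
    rw [hσpn] at h1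
    simpa using h1.symm
  have hφ1 : φ ^ p ^ n = 1 := by
    refine AddMonoidHom.ext fun x => ?_
    rw [show x = Additive.ofMul x.toMul from rfl]
    exact (hφpowiter _ _).trans (congrArg Additive.ofMul (hfiter _))
  have hu : ((φ - 1 : AddMonoid.End (Additive N))) ^ n = 0 := by
    refine end_sub_one_pow_eq_zero hp n (Additive N) ?_ φ n hφ1
    have : Nat.card (Additive N) = p ^ n := by
      rw [Nat.card_congr (Additive.toMul (α := N)), Nat.card_eq_fintype_card, hN]
    rw [this]
  have horder : ∀ k : ℕ, orderOf σ ∣ k ↔ ((σ ^ k : G) : Equiv.Perm N) 1 = 1 := by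
    intro k
    constructor
    · intro hk
      rw [orderOf_dvd_iff_pow_eq_one] at hk
      rw [hk]
      rfl
    · intro hk
      rw [orderOf_dvd_iff_pow_eq_one]
      have h1 := hreg.2 _ (σ ^ k : G).2 _ hk
      apply_fun (Subtype.val) using Subtype.val_injective
      exact h1
  have hiff : ∀ k : ℕ, (orderOf σ ∣ p ^ k ↔ orderOf a ∣ p ^ k) := by
    intro k
    rcases Nat.eq_zero_or_pos k with rfl | hk
    · rw [pow_zero, Nat.dvd_one, Nat.dvd_one, orderOf_eq_one_iff, orderOf_eq_one_iff]
      constructor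
      · rintro rfl
        rw [ha]
        rfl
      · intro ha1
        apply hinj
        simp only
        rw [← ha, ha1]
        rfl
    · obtain ⟨E, E', hEE, hsum⟩ := crux (R := AddMonoid.End (Additive N)) hp hn
        (by omega : n < p) hu hk
      have h1 : (1 : AddMonoid.End (Additive N)) + (φ - 1) = φ := by
        rw [add_comm, sub_add_cancel]
      rw [h1] at hsum
      have hval := hgeom (p ^ k)
      rw [hsum] at hval
      change _ = p ^ k • E (Additive.ofMul a) at hval
      rw [← map_nsmul] at hval
      rw [horder (p ^ k)]
      have h2 : (((σ ^ p ^ k : G) : Equiv.Perm N) 1 = 1)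
          ↔ E (p ^ k • Additive.ofMul a) = 0 := by
        rw [← ofMul_eq_zero, hval]
      rw [h2]
      have h3 : E (p ^ k • Additive.ofMul a) = 0 ↔ p ^ k • Additive.ofMul a = 0 := by
        constructor
        · intro h
          have h4 : E' (E (p ^ k • Additive.ofMul a)) = E' 0 := congrArg _ h
          rw [map_zero] at h4
          rwa [show E' (E (p ^ k • Additive.ofMul a))
            = (E' * E) (p ^ k • Additive.ofMul a) from rfl, hEE] at h4
        · intro h
          rw [h, map_zero]
      rw [h3]
      rw [show (p ^ k • Additive.ofMul a = 0) ↔ (Additive.ofMul (a ^ p ^ k) = 0) by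
        rw [ofMul_pow]]
      rw [ofMul_eq_zero, orderOf_dvd_iff_pow_eq_one]
  have hadvd : orderOf a ∣ p ^ n := by
    have h := orderOf_dvd_natCard a
    rwa [Nat.card_eq_fintype_card, hN] at h
  obtain ⟨s, hs, hσs⟩ := (Nat.dvd_prime_pow hp).mp hσdvd
  obtain ⟨t, ht, hat⟩ := (Nat.dvd_prime_pow hp).mp hadvd
  refine Nat.dvd_antisymm ?_ ?_
  · rw [hat]
    exact (hiff t).mpr (hat ▸ dvd_rfl)
  · rw [hσs]
    exact (hiff s).mp (hσs ▸ dvd_rfl)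
end

section
/- Let H be a nilpotent group, let a ∈ H with a ≠ 1, and let S be the normal closure of {a} in H, i.e. the smallest normal subgroup of H containing a. Then S strictly contains the commutator subgroup ⁅S, H⁆; in particular a ∉ ⁅S, H⁆. -/
theorem normalClosure_lt_of_nilpotent {H : Type*} [Group H]
    (hnil : Group.IsNilpotent H) (a : H) (ha : a ≠ 1) :
    ⁅Subgroup.normalClosure {a}, (⊤ : Subgroup H)⁆ < Subgroup.normalClosure {a} ∧
      a ∉ ⁅Subgroup.normalClosure {a}, (⊤ : Subgroup H)⁆ := by
  set S := Subgroup.normalClosure ({a} : Set H) with hS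
  have hle : ⁅S, (⊤ : Subgroup H)⁆ ≤ S := Subgroup.commutator_le_left S ⊤
  have hne : ⁅S, (⊤ : Subgroup H)⁆ ≠ S := by
    intro heq
    have hbot : ∀ n, S ≤ Subgroup.lowerCentralSeries (⊤ : Subgroup H) n := by
      intro n
      induction n with
      | zero => exact le_top
      | succ n ih =>
        calc S = ⁅S, (⊤ : Subgroup H)⁆ := heq.symm
        _ ≤ ⁅Subgroup.lowerCentralSeries (⊤ : Subgroup H) n, (⊤ : Subgroup H)⁆ :=
            Subgroup.commutator_mono ih le_rfl
        _ = Subgroup.lowerCentralSeries (⊤ : Subgroup H) (n + 1) := by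
            rw [lowerCentralSeries_succ]
    obtain ⟨n, hn⟩ := nilpotent_iff_lowerCentralSeries.mp hnil
    have : S = ⊥ := le_bot_iff.mp (hn ▸ hbot n)
    have haS : a ∈ S := Subgroup.subset_normalClosure rfl
    rw [this] at haS
    exact ha haS
  have hlt : ⁅S, (⊤ : Subgroup H)⁆ < S := lt_of_le_of_ne hle hne
  refine ⟨hlt, fun haC => ?_⟩
  have : S ≤ ⁅S, (⊤ : Subgroup H)⁆ :=
    Subgroup.normalClosure_le_normal (Set.singleton_subset_iff.mpr haC)
  exact hne (le_antisymm hle this)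
end

section
/- Let p be a prime, let H be a nilpotent group, and let N be a normal subgroup of H of order p^n. Define the descending sequence of subgroups C₀ = N and C_{k+1} = ⁅C_k, H⁆ for k ≥ 0. Then C_n is the trivial subgroup. -/
theorem lower_commutator_series_vanishes {p n : ℕ} (hp : p.Prime)
    {H : Type*} [Group H] (hnil : Group.IsNilpotent H)
    (N : Subgroup H) (hNnormal : N.Normal) (hN : Nat.card N = p ^ n)
    (C : ℕ → Subgroup H) (hC0 : C 0 = N)
    (hCsucc : ∀ k : ℕ, C (k + 1) = ⁅C k, (⊤ : Subgroup H)⁆) :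
    C n = ⊥ := by
  have hnorm : ∀ k, (C k).Normal := by
    intro k; induction k with
    | zero => rwa [hC0]
    | succ k ih => rw [hCsucc]; exact @Subgroup.commutator_normal _ _ _ _ ih inferInstance
  have key : ∀ (K : Subgroup H), K.Normal → ⁅K, (⊤ : Subgroup H)⁆ = K → K = ⊥ := by
    intro K hK hKeq
    obtain ⟨m, hm⟩ := nilpotent_iff_lowerCentralSeries.mp hnil
    have hall : ∀ i, K ≤ Subgroup.lowerCentralSeries (⊤ : Subgroup H) i := by
      intro i; induction i with
      | zero => rw [Subgroup.lowerCentralSeries_zero]; exact le_top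
      | succ i ih =>
        rw [Subgroup.lowerCentralSeries_succ, ← hKeq]
        exact Subgroup.commutator_mono ih le_rfl
    exact le_bot_iff.mp (hm ▸ hall m)
  have hdvd : ∀ k, Nat.card (C k) ∣ p ^ (n - k) := by
    intro k; induction k with
    | zero => rw [hC0, hN, Nat.sub_zero]
    | succ k ih =>
      by_cases hk : C k = ⊥
      · rw [hCsucc, hk, Subgroup.commutator_bot_left, Subgroup.card_bot]
        exact one_dvd _
      · obtain ⟨a, ha, hcard⟩ := (Nat.dvd_prime_pow hp).mp ih
        have hfin : Finite (C k) := by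
          refine Nat.finite_of_card_ne_zero ?_
          rw [hcard]; exact pow_ne_zero a hp.pos.ne'
        have hle' : C (k + 1) ≤ C k := by
          rw [hCsucc]; exact @Subgroup.commutator_le_left _ _ _ _ (hnorm k)
        have hdvd' : Nat.card (C (k + 1)) ∣ p ^ a := by
          rw [← hcard]; exact Subgroup.card_dvd_of_le hle'
        have hne : Nat.card (C (k + 1)) ≠ p ^ a := by
          intro heq
          apply hk
          apply key _ (hnorm k)
          rw [← hCsucc]
          exact Subgroup.eq_of_le_of_card_ge hle' (by rw [heq, hcard])
        obtain ⟨b, hb, hcb⟩ := (Nat.dvd_prime_pow hp).mp hdvd'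
        have hba : b < a := lt_of_le_of_ne hb (fun h => hne (by rw [hcb, h]))
        have ha' : 0 < a := Nat.pos_of_ne_zero (fun h => Nat.not_lt_zero b (h ▸ hba))
        rw [hcb]
        exact pow_dvd_pow p (by omega)
  exact Subgroup.card_eq_one.mp (Nat.eq_one_of_dvd_one (by simpa using hdvd n))
end

section
/- Let p be a prime and let A be an abelian group (written additively) of order p^n. Let φ be an automorphism of A whose order is a power of p. Then (φ − id)^n = 0 in the endomorphism ring of A, where id denotes the identity endomorphism and the power is taken with respect to composition. -/
theorem aut_sub_id_nilpotent {p n : ℕ} (hp : p.Prime)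
    {A : Type*} [AddCommGroup A] [Fintype A] (hA : Fintype.card A = p ^ n)
    (φ : AddAut A) (hord : ∃ m : ℕ, addOrderOf φ = p ^ m) :
    ((show AddMonoid.End A from φ.toAddMonoidHom) - 1) ^ n = 0 := by
  obtain ⟨m, hm⟩ := hord
  set f : AddMonoid.End A := φ.toAddMonoidHom with hf
  set ψ : AddMonoid.End A := f - 1 with hψdef
  -- powers of f agree with powers of φ
  have hpow : ∀ (k : ℕ) (a : A), (f ^ k) a = (k • φ) a := by
    intro k
    induction k with
    | zero => intro a; rfl
    | succ k ih =>
      intro a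
      rw [pow_succ, succ_nsmul, AddAut.add_apply]
      show (f ^ k) (f a) = _
      rw [ih]
      rfl
  have hfq : f ^ (p ^ m) = 1 := by
    apply AddMonoid.End.ext; intro a
    rw [hpow, ← hm, addOrderOf_nsmul_eq_zero φ]
    rfl
  -- ψ ^ (p ^ m) is p times something
  obtain ⟨r, hr⟩ := (Commute.one_right ψ).exists_add_pow_prime_pow_eq hp m
  have hfeq : ψ + 1 = f := by rw [hψdef]; abel
  rw [hfeq, hfq, one_pow] at hr
  obtain ⟨r, hr⟩ : ∃ r' : AddMonoid.End A, 1 = ψ ^ p ^ m + 1 + (p : AddMonoid.End A) * r' :=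
    ⟨ψ * 1 * r, by simpa only [mul_assoc] using hr⟩
  have hz : ψ ^ p ^ m + (p : AddMonoid.End A) * r = 0 := by
    calc ψ ^ p ^ m + (p : AddMonoid.End A) * r
        = (ψ ^ p ^ m + 1 + (p : AddMonoid.End A) * r) - 1 := by abel
      _ = 1 - 1 := by rw [← hr]
      _ = 0 := sub_self 1
  have h0 : ψ ^ p ^ m = (p : AddMonoid.End A) * (-r) := by
    rw [mul_neg]
    exact eq_neg_of_add_eq_zero_left hz
  -- p ^ n kills everything
  have hsm : ∀ x : AddMonoid.End A, (p : AddMonoid.End A) ^ n * x = 0 := by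
    intro x
    have hc : ((p : AddMonoid.End A)) ^ n = ((p ^ n : ℕ) : AddMonoid.End A) := by
      push_cast; rfl
    rw [hc, ← nsmul_eq_mul]
    apply AddMonoid.End.ext; intro a
    have : ((p ^ n) • x) a = (p ^ n) • (x a) := rfl
    rw [this, ← hA, card_nsmul_eq_zero]
    rfl
  have hnil : ψ ^ (p ^ m * n) = 0 := by
    rw [pow_mul, h0, (Nat.cast_commute p (-r)).mul_pow, hsm]
  -- kernel chain
  set K : ℕ → AddSubgroup A := fun i => AddMonoidHom.ker (ψ ^ i : AddMonoid.End A) with hK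
  have hmem : ∀ (i : ℕ) (x : A), x ∈ K i ↔ (ψ ^ i) x = 0 := fun i x =>
    AddMonoidHom.mem_ker
  have happly : ∀ (i j : ℕ) (x : A), (ψ ^ (i + j)) x = (ψ ^ i) ((ψ ^ j) x) := by
    intro i j x; rw [pow_add]; rfl
  have hmono : ∀ i, K i ≤ K (i + 1) := by
    intro i x hx
    rw [hmem] at hx ⊢
    rw [add_comm i 1, happly, hx, map_zero]
  have hmono' : ∀ i j, i ≤ j → K i ≤ K j := by
    intro i j hij
    induction hij with
    | refl => exact le_rfl
    | step h ih => exact le_trans ih (hmono _)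
  have hstab : ∀ i, K i = K (i + 1) → ∀ j, K (i + j) = K i := by
    intro i h j
    induction j with
    | zero => rfl
    | succ j ih =>
      apply le_antisymm
      · intro x hx
        rw [hmem] at hx
        have hx' : (ψ ^ ((i + 1) + j)) x = 0 := by
          rw [show (i + 1) + j = i + (j + 1) by omega]; exact hx
        rw [happly] at hx'
        have h1 : (ψ ^ j) x ∈ K i := by rw [h, hmem]; exact hx'
        rw [hmem] at h1
        have hx2 : x ∈ K (i + j) := by rw [hmem, happly]; exact h1
        rwa [ih] at hx2
      · exact hmono' i _ (by omega)
  have htop : K (p ^ m * n) = ⊤ := by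
    apply AddSubgroup.ext; intro x
    simp only [AddSubgroup.mem_top, iff_true]
    rw [hmem, hnil]
    rfl
  by_contra hcon
  have hKn : K n ≠ ⊤ := by
    intro h
    apply hcon
    apply AddMonoid.End.ext; intro x
    have hx : x ∈ K n := h ▸ AddSubgroup.mem_top x
    rw [hmem] at hx
    simpa using hx
  have hstrict : ∀ i, i < n → K i ≠ K (i + 1) := by
    intro i hi heq
    apply hKn
    have h1 : K (i + (p ^ m * n - i)) = K i := hstab i heq _
    have hle : i ≤ p ^ m * n := by
      have h2 : n ≤ p ^ m * n := Nat.le_mul_of_pos_left n (pow_pos hp.pos m)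
      omega
    rw [show i + (p ^ m * n - i) = p ^ m * n by omega, htop] at h1
    have h3 := hmono' i n hi.le
    rw [← h1] at h3
    exact top_le_iff.mp h3
  have hcardA : Nat.card A = p ^ n := by rw [Nat.card_eq_fintype_card, hA]
  have hdvd : ∀ i, i ≤ n → p ^ i ∣ Nat.card (K i) := by
    intro i
    induction i with
    | zero => intro _; simp
    | succ i ih =>
      intro hi
      have ih' := ih (by omega)
      have hle : K i ≤ K (i + 1) := hmono i
      have hdvd1 : Nat.card (K i) ∣ Nat.card (K (i + 1)) := AddSubgroup.card_dvd_of_le hle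
      have hne : Nat.card (K i) ≠ Nat.card (K (i + 1)) := by
        intro h
        exact hstrict i (by omega) (AddSubgroup.eq_of_le_of_card_ge hle h.ge)
      have hdvdtop : Nat.card (K (i + 1)) ∣ p ^ n :=
        hcardA ▸ AddSubgroup.card_addSubgroup_dvd_card _
      obtain ⟨b, hbn, hb⟩ := (Nat.dvd_prime_pow hp).mp hdvdtop
      obtain ⟨a, han, ha⟩ := (Nat.dvd_prime_pow hp).mp (hdvd1.trans hdvdtop)
      have hia : i ≤ a := (Nat.pow_dvd_pow_iff_le_right hp.one_lt).mp (ha ▸ ih')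
      have hab : a ≤ b := (Nat.pow_dvd_pow_iff_le_right hp.one_lt).mp (ha ▸ hb ▸ hdvd1)
      have haneb : a ≠ b := fun h => hne (by rw [ha, hb, h])
      rw [hb]
      exact pow_dvd_pow p (by omega)
  apply hKn
  apply AddSubgroup.eq_top_of_card_eq
  have hd1 : Nat.card (K n) ∣ p ^ n := hcardA ▸ AddSubgroup.card_addSubgroup_dvd_card _
  rw [hcardA, Nat.dvd_antisymm hd1 (hdvd n le_rfl)]
end

section
/- Let p be an odd prime and let N be a group of order p^n whose commutator subgroup ⁅N, N⁆ has order p. Then there exists an abelian group A of order p^n such that for every positive integer d, the number of elements of order d in A equals the number of elements of order d in N. -/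
open Finset Subgroup MulAction

private lemma card_eq_range_mul_ker {G H : Type*} [Group G] [Group H] (f : G →* H) :
    Nat.card G = Nat.card f.range * Nat.card f.ker := by
  rw [Subgroup.card_eq_card_quotient_mul_card_subgroup f.ker,
    Nat.card_congr (QuotientGroup.quotientKerEquivRange f).toEquiv]

private lemma card_comap_eq {G H : Type*} [Group G] [Group H] [Finite G] [Finite H]
    (f : G →* H) (S : Subgroup H) :
    Nat.card (S.comap f) = Nat.card (S ⊓ f.range : Subgroup H) * Nat.card f.ker := by
  have hmem : ∀ x : S.comap f, f x.1 ∈ S ⊓ f.range := fun x => ⟨x.2, ⟨x.1, rfl⟩⟩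
  let f' : (S.comap f) →* (S ⊓ f.range : Subgroup H) :=
    (f.comp (S.comap f).subtype).codRestrict _ hmem
  have hsurj : Function.Surjective f' := by
    rintro ⟨y, hy⟩
    rw [Subgroup.mem_inf] at hy
    obtain ⟨hyS, x, hx⟩ := hy
    refine ⟨⟨x, by simp [Subgroup.mem_comap, hx, hyS]⟩, ?_⟩
    ext
    exact hx
  have hle : f.ker ≤ S.comap f := fun k hk => by
    have : f k = 1 := MonoidHom.mem_ker.mp hk
    simp [Subgroup.mem_comap, this, one_mem]
  have hkereq : f'.ker = f.ker.subgroupOf (S.comap f) := by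
    ext x
    simp only [MonoidHom.mem_ker, Subgroup.mem_subgroupOf]
    exact Subtype.ext_iff
  have h1 := card_eq_range_mul_ker f'
  rw [MonoidHom.range_eq_top.mpr hsurj, hkereq,
    Nat.card_congr (Subgroup.subgroupOfEquivOfLe hle).toEquiv, Subgroup.card_top] at h1
  exact h1

private lemma central_mul_pow {G : Type*} [Group G] {x y z : G}
    (hz : ∀ g : G, z * g = g * z) (hyx : y * x = z * (x * y)) (k : ℕ) :
    (x * y) ^ k = x ^ k * y ^ k * z ^ k.choose 2 := by
  have hzm : ∀ (m : ℕ) (g : G), z ^ m * g = g * z ^ m := fun m g =>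
    ((show Commute z g from hz g).pow_left m).eq
  have h1 : ∀ w : G, z * (x * w) = x * (z * w) := fun w => by
    rw [← mul_assoc, hz x, mul_assoc]
  have h2 : ∀ w : G, z * (y * w) = y * (z * w) := fun w => by
    rw [← mul_assoc, hz y, mul_assoc]
  have h3 : ∀ (m : ℕ) (w : G), z ^ m * (x * w) = x * (z ^ m * w) := fun m w => by
    rw [← mul_assoc, hzm m x, mul_assoc]
  have h4 : ∀ (m : ℕ) (w : G), z ^ m * (y * w) = y * (z ^ m * w) := fun m w => by
    rw [← mul_assoc, hzm m y, mul_assoc]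
  have h5 : ∀ (m : ℕ) (w : G), z * (z ^ m * w) = z ^ m * (z * w) := fun m w => by
    rw [← mul_assoc, ← hzm m z, mul_assoc]
  have h6 : ∀ m : ℕ, z * z ^ m = z ^ m * z := fun m => (hzm m z).symm
  have h1' : z * x = x * z := hz x
  have h2' : z * y = y * z := hz y
  have h3' : ∀ m : ℕ, z ^ m * x = x * z ^ m := fun m => hzm m x
  have h4' : ∀ m : ℕ, z ^ m * y = y * z ^ m := fun m => hzm m y
  have h8 : ∀ (m : ℕ) (w : G), z * (y ^ m * w) = y ^ m * (z * w) := fun m w => by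
    rw [← mul_assoc, (show z * y ^ m = y ^ m * z from ((show Commute z y from hz y).pow_right m).eq), mul_assoc]
  have h9 : ∀ (m : ℕ) (w : G), z * (x ^ m * w) = x ^ m * (z * w) := fun m w => by
    rw [← mul_assoc, (show z * x ^ m = x ^ m * z from ((show Commute z x from hz x).pow_right m).eq), mul_assoc]
  have h10 : ∀ (a m : ℕ) (w : G), z ^ a * (y ^ m * w) = y ^ m * (z ^ a * w) := fun a m w => by
    rw [← mul_assoc, (hzm a (y ^ m)), mul_assoc]
  have h11 : ∀ (a m : ℕ) (w : G), z ^ a * (x ^ m * w) = x ^ m * (z ^ a * w) := fun a m w => by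
    rw [← mul_assoc, (hzm a (x ^ m)), mul_assoc]
  have h12 : ∀ (a m : ℕ), z ^ a * y ^ m = y ^ m * z ^ a := fun a m => hzm a (y ^ m)
  have h13 : ∀ (a m : ℕ), z ^ a * x ^ m = x ^ m * z ^ a := fun a m => hzm a (x ^ m)
  have h15 : ∀ b : ℕ, z * z ^ b = z ^ (b + 1) := fun b => (pow_succ' z b).symm
  have h16 : ∀ (b : ℕ) (w : G), z * (z ^ b * w) = z ^ (b + 1) * w := fun b w => by
    rw [← mul_assoc, h15]
  have h17 : ∀ b : ℕ, z ^ b * z = z ^ (b + 1) := fun b => (pow_succ z b).symm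
  have h18 : ∀ (b : ℕ) (w : G), z ^ b * (z * w) = z ^ (b + 1) * w := fun b w => by
    rw [← mul_assoc, h17]
  have h19 : ∀ (a b : ℕ), z ^ a * z ^ b = z ^ (a + b) := fun a b => (pow_add z a b).symm
  have h20 : ∀ (a b : ℕ) (w : G), z ^ a * (z ^ b * w) = z ^ (a + b) * w := fun a b w => by
    rw [← mul_assoc, h19]
  have key : ∀ m : ℕ, y ^ m * x = x * y ^ m * z ^ m := by
    intro m
    induction m with
    | zero => simp
    | succ m ih =>
      calc y ^ (m + 1) * x = y ^ m * (y * x) := by rw [pow_succ, mul_assoc]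
        _ = y ^ m * z * (x * y) := by rw [hyx, mul_assoc]
        _ = z * (y ^ m * x * y) := by
              rw [← hz (y ^ m)]
              simp [mul_assoc]
        _ = z * (x * y ^ m * z ^ m * y) := by rw [ih]
        _ = x * y ^ (m + 1) * z ^ (m + 1) := by
              rw [pow_succ y, pow_succ z]
              simp only [mul_assoc, h1, h2, h3, h4, h5, h6, h1', h2', h3', h4', h8, h9, h10, h11, h12, h13, h15, h16, h17, h18, h19, h20, Nat.add_comm]
  induction k with
  | zero => simp
  | succ k ih =>
    have hch : (k + 1).choose 2 = k.choose 2 + k := by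
      rw [Nat.choose_succ_succ]
      simp [Nat.choose_one_right, Nat.add_comm]
    calc (x * y) ^ (k + 1) = (x * y) ^ k * (x * y) := pow_succ _ _
      _ = x ^ k * y ^ k * z ^ k.choose 2 * (x * y) := by rw [ih]
      _ = x ^ k * (y ^ k * x) * y * z ^ k.choose 2 := by
            simp only [mul_assoc, h1, h2, h3, h4, h5, h6, h1', h2', h3', h4', h8, h9, h10, h11, h12, h13, h15, h16, h17, h18, h19, h20, Nat.add_comm]
      _ = x ^ k * (x * y ^ k * z ^ k) * y * z ^ k.choose 2 := by rw [key k]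
      _ = x ^ (k + 1) * y ^ (k + 1) * z ^ ((k + 1).choose 2) := by
            rw [hch, pow_add, pow_succ x, pow_succ y]
            simp only [mul_assoc, pow_zero, one_mul, h1, h2, h3, h4, h5, h6, h1', h2', h3', h4', h8, h9, h10, h11, h12, h13, h15, h16, h17, h18, h19, h20, Nat.add_comm]

private lemma card_pow_cyclic {G : Type*} [Group G] [Fintype G] [IsCyclic G]
    {p l : ℕ} (hp : p.Prime) (hG : Fintype.card G = p ^ l) (i : ℕ) :
    Nat.card {x : G // x ^ p ^ i = 1} = p ^ min i l := by
  classical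
  haveI := Fact.mk hp
  have hset : ∀ x : G, (x ^ p ^ i = 1) ↔ (x ^ p ^ min i l = 1) := by
    intro x
    rw [← orderOf_dvd_iff_pow_eq_one, ← orderOf_dvd_iff_pow_eq_one]
    constructor
    · intro h
      have hl : orderOf x ∣ p ^ l := hG ▸ orderOf_dvd_card
      rcases le_total i l with h' | h'
      · rw [min_eq_left h']; exact h
      · rw [min_eq_right h']; exact hl
    · intro h
      exact h.trans (pow_dvd_pow p (min_le_left i l))
  have hcongr : Nat.card {x : G // x ^ p ^ i = 1} = Nat.card {x : G // x ^ p ^ min i l = 1} :=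
    Nat.card_congr (Equiv.subtypeEquivRight hset)
  rw [hcongr]
  have hle : Nat.card {x : G // x ^ p ^ min i l = 1} ≤ p ^ min i l := by
    rw [Nat.card_eq_fintype_card, Fintype.card_subtype]
    have := IsCyclic.card_pow_eq_one_le (α := G) (n := p ^ min i l) (pow_pos hp.pos _)
    convert this using 2
  have hge : p ^ min i l ≤ Nat.card {x : G // x ^ p ^ min i l = 1} := by
    obtain ⟨K, hK⟩ := Sylow.exists_subgroup_card_pow_prime (G := G) p
      (n := min i l) (by
        rw [Nat.card_eq_fintype_card, hG]
        exact pow_dvd_pow p (min_le_right i l))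
    have hKmem : ∀ k : K, (k : G) ^ p ^ min i l = 1 := by
      intro k
      have h1 : (k : K) ^ p ^ min i l = 1 := by
        rw [← hK]
        exact pow_card_eq_one'
      have := congrArg (Subgroup.subtype K) h1
      simpa using this
    calc p ^ min i l = Nat.card K := hK.symm
      _ ≤ Nat.card {x : G // x ^ p ^ min i l = 1} := by
          apply Nat.card_le_card_of_injective (fun k => ⟨k.1, hKmem k⟩)
          intro a b hab
          exact Subtype.ext (by simpa using congrArg Subtype.val hab)
  omega

private lemma conj_sum_min {n : ℕ} (c : ℕ → ℕ)
    (hmono : ∀ ⦃j k : ℕ⦄, j ≤ k → c k ≤ c j)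
    (hcn : ∀ k, n ≤ k → c k = 0) (hbd : ∀ k, c k ≤ n) (i : ℕ) :
    ∑ j ∈ range n, min i (((range n).filter (fun k => j < c k)).card)
      = ∑ t ∈ range i, c t := by
  set L : ℕ → ℕ := fun j => ((range n).filter (fun k => j < c k)).card with hL
  have h1 : ∀ j, min i (L j) = ((range i).filter (fun t => t < L j)).card := by
    intro j
    have : (range i).filter (fun t => t < L j) = range (min i (L j)) := by
      ext t
      simp [Finset.mem_filter, Finset.mem_range, lt_min_iff]
    rw [this, Finset.card_range]
  have h2 : ∀ t j, t < L j ↔ j < c t := by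
    intro t j
    constructor
    · intro ht
      by_contra hc
      push_neg at hc
      have hsub : (range n).filter (fun k => j < c k) ⊆ range t := by
        intro k hk
        simp only [Finset.mem_filter, Finset.mem_range] at hk ⊢
        by_contra hkt
        push_neg at hkt
        exact absurd (lt_of_lt_of_le hk.2 (hmono hkt)) (not_lt.mpr hc)
      have := Finset.card_le_card hsub
      rw [Finset.card_range] at this
      have hLj : L j = ((range n).filter (fun k => j < c k)).card := rfl
      omega
    · intro hc
      have htn : t < n := by
        by_contra htn
        push_neg at htn
        have := hcn t htn
        omega
      have hsub : range (t + 1) ⊆ (range n).filter (fun k => j < c k) := by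
        intro k hk
        simp only [Finset.mem_range] at hk
        simp only [Finset.mem_filter, Finset.mem_range]
        exact ⟨lt_of_lt_of_le hk (by omega), lt_of_lt_of_le hc (hmono (by omega))⟩
      have := Finset.card_le_card hsub
      rw [Finset.card_range] at this
      have hLj : L j = ((range n).filter (fun k => j < c k)).card := rfl
      omega
  calc ∑ j ∈ range n, min i (L j)
      = ∑ j ∈ range n, ∑ t ∈ range i, if t < L j then 1 else 0 := by
        refine Finset.sum_congr rfl fun j _ => ?_
        rw [h1 j, Finset.card_filter]
    _ = ∑ t ∈ range i, ∑ j ∈ range n, if t < L j then 1 else 0 := Finset.sum_comm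
    _ = ∑ t ∈ range i, c t := by
        refine Finset.sum_congr rfl fun t _ => ?_
        have : ∀ j, (if t < L j then (1:ℕ) else 0) = if j < c t then 1 else 0 := by
          intro j
          simp [h2 t j]
        simp only [this]
        rw [← Finset.card_filter]
        have : (range n).filter (fun j => j < c t) = range (c t) := by
          ext j
          simp only [Finset.mem_filter, Finset.mem_range]
          constructor
          · exact fun h => h.2
          · exact fun h => ⟨lt_of_lt_of_le h (hbd t), h⟩
        rw [this, Finset.card_range]

private lemma count_split {p : ℕ} (hp : p.Prime) {G : Type*} [Group G] [Fintype G]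
    (i : ℕ) :
    Nat.card {x : G // x ^ p ^ (i + 1) = 1}
      = Nat.card {x : G // x ^ p ^ i = 1} + Nat.card {x : G // orderOf x = p ^ (i + 1)} := by
  classical
  simp only [Nat.card_eq_fintype_card, Fintype.card_subtype]
  have hiff : ∀ x : G, x ^ p ^ (i + 1) = 1 ↔ (x ^ p ^ i = 1 ∨ orderOf x = p ^ (i + 1)) := by
    intro x
    rw [← orderOf_dvd_iff_pow_eq_one, ← orderOf_dvd_iff_pow_eq_one]
    constructor
    · intro h
      obtain ⟨j, hj, hje⟩ := (Nat.dvd_prime_pow hp).mp h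
      rcases Nat.lt_or_ge j (i + 1) with hj' | hj'
      · exact Or.inl (hje ▸ pow_dvd_pow p (by omega))
      · exact Or.inr (by rw [hje]; congr 1; omega)
    · rintro (h | h)
      · exact h.trans (pow_dvd_pow p (by omega))
      · exact h ▸ dvd_rfl
  have hdisj : ∀ x : G, x ^ p ^ i = 1 → orderOf x = p ^ (i + 1) → False := by
    intro x h1 h2
    rw [← orderOf_dvd_iff_pow_eq_one, h2] at h1
    have := Nat.le_of_dvd (pow_pos hp.pos i) h1
    exact absurd (Nat.pow_lt_pow_right hp.one_lt (Nat.lt_succ_self i)) (not_lt.mpr this)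
  have : univ.filter (fun x : G => x ^ p ^ (i + 1) = 1)
      = univ.filter (fun x : G => x ^ p ^ i = 1) ∪ univ.filter (fun x : G => orderOf x = p ^ (i + 1)) := by
    ext x
    simp [hiff x]
  rw [this, Finset.card_union_of_disjoint]
  rw [Finset.disjoint_filter]
  intro x _ h1 h2
  exact hdisj x h1 h2

private lemma count_orderOf_transfer {p : ℕ} (hp : p.Prime) {A B : Type*}
    [Group A] [Group B] [Fintype A] [Fintype B]
    (hA : ∀ x : A, ∃ k : ℕ, orderOf x = p ^ k) (hB : ∀ x : B, ∃ k : ℕ, orderOf x = p ^ k)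
    (h : ∀ i : ℕ, Nat.card {x : A // x ^ p ^ i = 1} = Nat.card {x : B // x ^ p ^ i = 1})
    (d : ℕ) (hd : 0 < d) :
    Nat.card {x : A // orderOf x = d} = Nat.card {x : B // orderOf x = d} := by
  classical
  by_cases hdp : ∃ i : ℕ, d = p ^ i
  · obtain ⟨i, rfl⟩ := hdp
    cases i with
    | zero =>
      have e1 : ∀ x : A, orderOf x = p ^ 0 ↔ x = 1 := by
        simp [pow_zero, orderOf_eq_one_iff]
      have e2 : ∀ x : B, orderOf x = p ^ 0 ↔ x = 1 := by
        simp [pow_zero, orderOf_eq_one_iff]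
      rw [Nat.card_congr (Equiv.subtypeEquivRight e1), Nat.card_congr (Equiv.subtypeEquivRight e2)]
      simp [Nat.card_eq_fintype_card, Fintype.card_subtype_eq]
    | succ i =>
      have hA' := count_split hp (G := A) i
      have hB' := count_split hp (G := B) i
      rw [h i, h (i + 1)] at hA'
      omega
  · push_neg at hdp
    have e1 : IsEmpty {x : A // orderOf x = d} := by
      constructor
      rintro ⟨x, hx⟩
      obtain ⟨k, hk⟩ := hA x
      exact hdp k (hx ▸ hk)
    have e2 : IsEmpty {x : B // orderOf x = d} := by
      constructor
      rintro ⟨x, hx⟩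
      obtain ⟨k, hk⟩ := hB x
      exact hdp k (hx ▸ hk)
    rw [Nat.card_of_isEmpty, Nat.card_of_isEmpty]

private lemma commutator_le_center_of_card_prime {p : ℕ} (hp : p.Prime)
    {N : Type*} [Group N] [Fintype N] (hpg : IsPGroup p N)
    (hcomm : Nat.card (commutator N) = p) :
    commutator N ≤ Subgroup.center N := by
  classical
  haveI := Fact.mk hp
  have hact := (hpg.of_equiv ConjAct.toConjAct).card_modEq_card_fixedPoints
    ((commutator N) : Subgroup N)
  rw [hcomm] at hact
  have hdvd : p ∣ Nat.card (fixedPoints (ConjAct N) (commutator N)) :=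
    Nat.modEq_zero_iff_dvd.mp (hact.symm.trans (Nat.modEq_zero_iff_dvd.mpr dvd_rfl))
  have h1mem : (1 : (commutator N)) ∈ fixedPoints (ConjAct N) (commutator N) :=
    fun g => smul_one g
  haveI : Nonempty (fixedPoints (ConjAct N) (commutator N)) := ⟨⟨1, h1mem⟩⟩
  have hpos : 0 < Nat.card (fixedPoints (ConjAct N) (commutator N)) := Nat.card_pos
  have hge : p ≤ Nat.card (fixedPoints (ConjAct N) (commutator N)) :=
    Nat.le_of_dvd hpos hdvd
  have heq : fixedPoints (ConjAct N) ((commutator N) : Subgroup N) = Set.univ := by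
    apply Set.eq_of_subset_of_ncard_le (Set.subset_univ _)
    rw [Set.ncard_univ, ← Nat.card_coe_set_eq, hcomm]
    exact hge
  intro z hz
  rw [Subgroup.mem_center_iff]
  intro g
  have hfix : (⟨z, hz⟩ : (commutator N)) ∈ fixedPoints (ConjAct N) (commutator N) := by
    rw [heq]; trivial
  have h2 := hfix (ConjAct.toConjAct g)
  have h3 := congrArg (Subgroup.subtype _) h2
  change ((ConjAct.toConjAct g • (⟨z, hz⟩ : commutator N) : commutator N) : N) = z at h3
  simp only [ConjAct.Subgroup.val_conj_smul, ConjAct.smul_def, ConjAct.ofConjAct_toConjAct] at h3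
  have h4 : g * z * g⁻¹ = z := by simpa using h3
  calc g * z = g * z * g⁻¹ * g := by group
    _ = z * g := by rw [h4]

private lemma N_torsion_card {p n : ℕ} (hp : p.Prime) (hodd : Odd p)
    {N : Type*} [Group N] [Fintype N] (hN : Fintype.card N = p ^ n)
    (hcomm : Nat.card (commutator N) = p) :
    ∃ c : ℕ → ℕ, (∀ ⦃j k : ℕ⦄, j ≤ k → c k ≤ c j) ∧ (∀ k, n ≤ k → c k = 0) ∧
      (∀ k, c k ≤ n) ∧ (∑ t ∈ range n, c t = n) ∧
      (∀ i : ℕ, Nat.card {x : N // x ^ p ^ i = 1} = p ^ (∑ t ∈ range i, c t)) := by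
  classical
  haveI := Fact.mk hp
  have hcard : Nat.card N = p ^ n := by rw [Nat.card_eq_fintype_card, hN]
  have hpg : IsPGroup p N := IsPGroup.of_card hcard
  have hcen := commutator_le_center_of_card_prime hp hpg hcomm
  have hzmem : ∀ a b : N, b * a * b⁻¹ * a⁻¹ ∈ commutator N := by
    intro a b
    have h := Subgroup.commutator_mem_commutator (Subgroup.mem_top b) (Subgroup.mem_top a)
    rw [commutator_def]
    simpa [commutatorElement_def] using h
  have hzp : ∀ w : N, w ∈ commutator N → w ^ p = 1 := by
    intro w hw
    have h1 : orderOf (⟨w, hw⟩ : commutator N) ∣ p := hcomm ▸ orderOf_dvd_natCard _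
    have h2 : (⟨w, hw⟩ : commutator N) ^ p = 1 := orderOf_dvd_iff_pow_eq_one.mp h1
    have h3 := congrArg (Subgroup.subtype _) h2
    simpa using h3
  have hmul : ∀ x y : N, (x * y) ^ p = x ^ p * y ^ p := by
    intro x y
    set z := y * x * y⁻¹ * x⁻¹ with hzdef
    have hzc : ∀ g : N, z * g = g * z := fun g =>
      (Subgroup.mem_center_iff.mp (hcen (hzmem x y)) g).symm
    have hyx : y * x = z * (x * y) := by rw [hzdef]; group
    have hkey := central_mul_pow hzc hyx p
    obtain ⟨m, hm⟩ := hodd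
    have hch2 : p.choose 2 = p * m := by
      rw [Nat.choose_two_right, hm]
      have h4 : (2 * m + 1) * (2 * m + 1 - 1) = (2 * m + 1) * m * 2 := by
        simp only [Nat.add_sub_cancel]
        ring
      rw [h4, Nat.mul_div_cancel _ (by norm_num)]
    have hz1 : z ^ p.choose 2 = 1 := by
      rw [hch2, pow_mul, hzp z (hzmem x y), one_pow]
    rw [hkey, hz1, mul_one]
  set φ : N →* N := { toFun := fun x => x ^ p, map_one' := one_pow p, map_mul' := hmul }
    with hφdef
  have hφ : ∀ x : N, φ x = x ^ p := fun x => rfl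
  set ψ : ℕ → N →* N := fun k => Nat.rec (MonoidHom.id N) (fun _ g => φ.comp g) k with hψdef
  have hψs : ∀ k, ψ (k + 1) = φ.comp (ψ k) := fun k => rfl
  have hψ : ∀ (k : ℕ) (x : N), ψ k x = x ^ p ^ k := by
    intro k
    induction k with
    | zero => intro x; simp [ψ]
    | succ k ih =>
      intro x
      rw [hψs, MonoidHom.comp_apply, ih, hφ, ← pow_mul, ← pow_succ]
  have hψs' : ∀ k, ψ (k + 1) = (ψ k).comp φ := by
    intro k
    refine MonoidHom.ext fun x => (hψ (k + 1) x).trans ?_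
    rw [MonoidHom.comp_apply, hψ k (φ x), hφ, ← pow_mul, ← pow_succ']
  set b : ℕ → ℕ := fun k => Nat.card (φ.ker ⊓ (ψ k).range : Subgroup N) with hbdef
  have hrec : ∀ k, Nat.card ((ψ (k + 1)).ker) = b k * Nat.card ((ψ k).ker) := by
    intro k
    have h1 : (ψ (k + 1)).ker = φ.ker.comap (ψ k) := by
      rw [hψs k, MonoidHom.comap_ker]
    rw [h1, card_comap_eq]
  have ha : ∀ i, Nat.card ((ψ i).ker) = ∏ t ∈ range i, b t := by
    intro i
    induction i with
    | zero =>
      have h0 : (ψ 0).ker = ⊥ := MonoidHom.ker_id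
      rw [h0, Subgroup.card_bot, prod_range_zero]
    | succ i ih =>
      rw [hrec, ih, prod_range_succ, mul_comm]
  have hUanti : ∀ k, (ψ (k + 1)).range ≤ (ψ k).range := by
    intro k
    rw [hψs' k]
    rintro w ⟨x, rfl⟩
    exact ⟨φ x, rfl⟩
  have hanti : Antitone fun k => (ψ k).range := antitone_nat_of_succ_le hUanti
  have hbanti : Antitone b := antitone_nat_of_succ_le fun k =>
    Subgroup.card_le_of_le (inf_le_inf_left _ (hUanti k))
  have hbdvd : ∀ k, b k ∣ p ^ n := fun k => hcard ▸ Subgroup.card_subgroup_dvd_card _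
  choose c hcle hceq using fun k => (Nat.dvd_prime_pow hp).mp (hbdvd k)
  have hcmono : ∀ ⦃j k : ℕ⦄, j ≤ k → c k ≤ c j := by
    intro j k hjk
    have := hbanti hjk
    rw [hceq j, hceq k] at this
    exact (Nat.pow_le_pow_iff_right hp.one_lt).mp this
  have hψn : ψ n = 1 := by
    ext x
    rw [hψ n x, ← hN, pow_card_eq_one, MonoidHom.one_apply]
  have hbone : ∀ k, n ≤ k → b k = 1 := by
    intro k hk
    have h1 : (ψ k).range ≤ ⊥ := by
      calc (ψ k).range ≤ (ψ n).range := hanti hk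
        _ = ⊥ := by rw [hψn, MonoidHom.range_one]
    have h2 : (φ.ker ⊓ (ψ k).range : Subgroup N) = ⊥ :=
      le_bot_iff.mp (le_trans inf_le_right h1)
    rw [hbdef]
    simp only [h2, Subgroup.card_bot]
  have hc0 : ∀ k, n ≤ k → c k = 0 := by
    intro k hk
    have h1 : p ^ c k = 1 := by rw [← hceq k]; exact hbone k hk
    by_contra h2
    have := Nat.one_lt_pow h2 hp.one_lt
    omega
  have hprod : ∀ i, ∏ t ∈ range i, b t = p ^ (∑ t ∈ range i, c t) := by
    intro i
    rw [← Finset.prod_pow_eq_pow_sum]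
    exact Finset.prod_congr rfl fun t _ => hceq t
  have hsum : ∑ t ∈ range n, c t = n := by
    have h1 : Nat.card ((ψ n).ker) = p ^ n := by
      rw [hψn, MonoidHom.ker_one, Subgroup.card_top, hcard]
    rw [ha n, hprod n] at h1
    exact Nat.pow_right_injective hp.two_le h1
  refine ⟨c, hcmono, hc0, hcle, hsum, ?_⟩
  intro i
  have hequiv : Nat.card {x : N // x ^ p ^ i = 1} = Nat.card ((ψ i).ker) := by
    apply Nat.card_congr
    apply Equiv.subtypeEquivRight
    intro x
    rw [MonoidHom.mem_ker, hψ i x]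
  rw [hequiv, ha i, hprod i]

private lemma abelian_side {p n : ℕ} (hp : p.Prime) (c : ℕ → ℕ)
    (hmono : ∀ ⦃j k : ℕ⦄, j ≤ k → c k ≤ c j)
    (hcn : ∀ k, n ≤ k → c k = 0) (hbd : ∀ k, c k ≤ n)
    (hsum : ∑ t ∈ range n, c t = n) :
    ∃ (A : Type) (_ : CommGroup A) (_ : Fintype A),
      Fintype.card A = p ^ n ∧
        ∀ i : ℕ, Nat.card {a : A // a ^ p ^ i = 1} = p ^ (∑ t ∈ range i, c t) := by
  classical
  set L : ℕ → ℕ := fun j => ((range n).filter (fun k => j < c k)).card with hLdef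
  have hLle : ∀ j, L j ≤ n := by
    intro j
    calc L j ≤ (range n).card := Finset.card_filter_le _ _
      _ = n := Finset.card_range n
  haveI hNZ : ∀ j : Fin n, NeZero (p ^ L (j : ℕ)) := fun j => ⟨pow_ne_zero _ hp.ne_zero⟩
  refine ⟨∀ j : Fin n, Multiplicative (ZMod (p ^ L (j : ℕ))), inferInstance, inferInstance, ?_, ?_⟩
  · rw [Fintype.card_pi]
    have h1 : ∀ j : Fin n, Fintype.card (Multiplicative (ZMod (p ^ L (j : ℕ)))) = p ^ L (j : ℕ) := by
      intro j
      rw [Fintype.card_multiplicative, ZMod.card]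
    rw [Finset.prod_congr rfl fun j _ => h1 j, Finset.prod_pow_eq_pow_sum]
    congr 1
    have h2 : ∑ j : Fin n, L (j : ℕ) = ∑ j ∈ range n, L j := Fin.sum_univ_eq_sum_range L n
    rw [h2]
    calc ∑ j ∈ range n, L j = ∑ j ∈ range n, min n (L j) :=
          Finset.sum_congr rfl fun j _ => (min_eq_right (hLle j)).symm
      _ = ∑ t ∈ range n, c t := conj_sum_min c hmono hcn hbd n
      _ = n := hsum
  · intro i
    have he1 : ∀ a : (∀ j : Fin n, Multiplicative (ZMod (p ^ L (j : ℕ)))),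
        (a ^ p ^ i = 1) ↔ ∀ j, (a j) ^ p ^ i = 1 := by
      intro a
      rw [funext_iff]
      apply forall_congr'
      intro j
      simp [Pi.pow_apply]
    have hcards : Nat.card {a : (∀ j : Fin n, Multiplicative (ZMod (p ^ L (j : ℕ)))) // a ^ p ^ i = 1}
        = ∏ j : Fin n, Nat.card {y : Multiplicative (ZMod (p ^ L (j : ℕ))) // y ^ p ^ i = 1} := by
      rw [Nat.card_congr ((Equiv.subtypeEquivRight he1).trans (Equiv.subtypePiEquivPi (p := fun (j : Fin n) (y : Multiplicative (ZMod (p ^ L (j : ℕ)))) => y ^ p ^ i = 1)))]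
      exact Nat.card_pi
    rw [hcards]
    have h3 : ∀ j : Fin n, Nat.card {y : Multiplicative (ZMod (p ^ L (j : ℕ))) // y ^ p ^ i = 1}
        = p ^ min i (L (j : ℕ)) := by
      intro j
      exact card_pow_cyclic hp (by rw [Fintype.card_multiplicative, ZMod.card]) i
    rw [Finset.prod_congr rfl fun j _ => h3 j, Finset.prod_pow_eq_pow_sum]
    congr 1
    rw [Fin.sum_univ_eq_sum_range (fun j => min i (L j)) n]
    exact conj_sum_min c hmono hcn hbd i

theorem exists_abelian_same_order_counts {p n : ℕ} (hp : p.Prime) (hodd : Odd p)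
    {N : Type*} [Group N] [Fintype N] (hN : Fintype.card N = p ^ n)
    (hcomm : Nat.card (commutator N) = p) :
    ∃ (A : Type) (_ : CommGroup A) (_ : Fintype A),
      Fintype.card A = p ^ n ∧
        ∀ d : ℕ, 0 < d →
          Nat.card {a : A // orderOf a = d} = Nat.card {x : N // orderOf x = d} := by
  obtain ⟨c, hmono, hcn, hbd, hsum, hT⟩ := N_torsion_card hp hodd hN hcomm
  obtain ⟨A, hCG, hFT, hcardA, hTA⟩ := abelian_side hp c hmono hcn hbd hsum
  refine ⟨A, hCG, hFT, hcardA, ?_⟩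
  intro d hd
  letI := hCG
  letI := hFT
  apply count_orderOf_transfer hp ?_ ?_ ?_ d hd
  · intro x
    have h1 : orderOf x ∣ p ^ n := by
      rw [← hcardA]
      exact orderOf_dvd_card
    obtain ⟨k, _, hk⟩ := (Nat.dvd_prime_pow hp).mp h1
    exact ⟨k, hk⟩
  · intro x
    have h1 : orderOf x ∣ p ^ n := by
      rw [← hN]
      exact orderOf_dvd_card
    obtain ⟨k, _, hk⟩ := (Nat.dvd_prime_pow hp).mp h1
    exact ⟨k, hk⟩
  · intro i
    rw [hTA i, hT i]
end

section
/- Let p be an odd prime and let N be a group of order p^n whose commutator subgroup ⁅N, N⁆ has order p. Let A be an abelian group of order p^n such that for every positive integer d, the number of elements of order d in A equals the number of elements of order d in N. Then there exists a regular subgroup N' of Hol(A) ≤ Perm(A) such that N' is isomorphic to N and the normalizer of N' in Hol(A) has order |N| · |Aut(N)| (equivalently, the normalizer of N' in Hol(A) equals its normalizer in Perm(A)). -/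
set_option maxHeartbeats 1000000 in
section


namespace HolAux

variable {G : Type*} [Group G]

lemma mem_lam_range {σ : Equiv.Perm G} :
    σ ∈ (MulAction.toPermHom G G).range ↔ ∃ a : G, ∀ x, σ x = a * x := by
  constructor
  · rintro ⟨a, rfl⟩
    exact ⟨a, fun x => rfl⟩
  · rintro ⟨a, ha⟩
    refine ⟨a, ?_⟩
    ext x
    exact (ha x).symm

lemma mem_normalizer_of_both {H : Subgroup G} {σ : G}
    (h1 : ∀ h ∈ H, σ * h * σ⁻¹ ∈ H) (h2 : ∀ h ∈ H, σ⁻¹ * h * σ ∈ H) :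
    σ ∈ Subgroup.normalizer (H : Set G) := by
  rw [Subgroup.mem_normalizer_iff]
  intro h
  constructor
  · exact fun hh => h1 h hh
  · intro hh
    have := h2 _ hh
    simpa [mul_assoc] using this

lemma mem_Hol_of {σ : Equiv.Perm G}
    (h1 : ∀ a : G, ∃ b : G, ∀ x, σ (a * x) = b * σ x)
    (h2 : ∀ a : G, ∃ b : G, ∀ x, σ.symm (a * x) = b * σ.symm x) :
    σ ∈ Hol G := by
  apply mem_normalizer_of_both
  · rintro h hh
    rw [mem_lam_range] at hh ⊢
    obtain ⟨a, ha⟩ := hh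
    obtain ⟨b, hb⟩ := h1 a
    refine ⟨b, fun x => ?_⟩
    have : (σ * h * σ⁻¹) x = σ (a * σ⁻¹ x) := by
      simp [Equiv.Perm.mul_apply, ha]
    rw [this, hb (σ⁻¹ x)]
    simp
  · rintro h hh
    rw [mem_lam_range] at hh ⊢
    obtain ⟨a, ha⟩ := hh
    obtain ⟨b, hb⟩ := h2 a
    refine ⟨b, fun x => ?_⟩
    have : (σ⁻¹ * h * σ) x = σ.symm (a * σ x) := by
      show σ⁻¹ (h (σ x)) = _
      rw [ha]; rfl
    rw [this, hb (σ x)]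
    simp

lemma lam_mem_Hol (a : G) : (MulAction.toPermHom G G) a ∈ Hol G := by
  apply mem_Hol_of
  · intro b
    exact ⟨a * b * a⁻¹, fun x => by
      simp [MulAction.toPermHom_apply, MulAction.toPerm_apply, smul_eq_mul]
      group⟩
  · intro b
    exact ⟨a⁻¹ * b * a, fun x => by
      have : ((MulAction.toPermHom G G) a).symm x = a⁻¹ * x := rfl
      simp [this]
      group⟩

/-- Decomposition: every element of `Hol G` is a translation followed by an automorphism. -/
lemma hol_decomp {σ : Equiv.Perm G} (h : σ ∈ Hol G) :
    ∃ (a : G) (f : MulAut G), ∀ x, σ x = a * f x := by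
  set a := σ 1 with ha
  set τ : Equiv.Perm G := ((MulAction.toPermHom G G) a)⁻¹ * σ with hτ
  have hτ_mem : τ ∈ Hol G := mul_mem (inv_mem (lam_mem_Hol a)) h
  have hτ1 : τ 1 = 1 := by
    simp [hτ, Equiv.Perm.mul_apply]
    show a⁻¹ * σ 1 = 1
    rw [← ha]; group
  have hτ_symm1 : τ.symm 1 = 1 := by
    conv_lhs => rw [← hτ1]
    rw [Equiv.symm_apply_apply]
  -- τ conjugates translations to translations; evaluate to get multiplicativity
  have hmul : ∀ g x : G, τ (g * x) = τ g * τ x := by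
    intro g x
    have hg : (MulAction.toPermHom G G) g ∈ (MulAction.toPermHom G G).range := ⟨g, rfl⟩
    have := (Subgroup.mem_normalizer_iff.mp hτ_mem ((MulAction.toPermHom G G) g)).mp hg
    rw [mem_lam_range] at this
    obtain ⟨u, hu⟩ := this
    have key : ∀ y : G, τ (g * τ.symm y) = u * y := by
      intro y
      have := hu y
      simpa [Equiv.Perm.mul_apply] using this
    have hu_eq : u = τ g := by
      have := key 1
      rw [hτ_symm1] at this
      simpa using this.symm
    have := key (τ x)
    rw [Equiv.symm_apply_apply] at this
    rw [this, hu_eq]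
  refine ⟨a, MulEquiv.mk' τ (fun g h => hmul g h), fun x => ?_⟩
  show σ x = a * τ x
  simp [hτ, Equiv.Perm.mul_apply]

lemma aut_mem_Hol (f : MulAut G) : (f : Equiv.Perm G) ∈ Hol G := by
  apply mem_Hol_of
  · intro a
    exact ⟨f a, fun x => by simp [map_mul]⟩
  · intro a
    exact ⟨f.symm a, fun x => by
      show f.symm (a * x) = f.symm a * f.symm x
      simp [map_mul]⟩

/-- `Hol G ≃ G × MulAut G`. -/
noncomputable def holEquiv : (G × MulAut G) ≃ Hol G := by
  refine Equiv.ofBijective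
    (fun p => ⟨(MulAction.toPermHom G G) p.1 * (p.2 : Equiv.Perm G),
      mul_mem (lam_mem_Hol p.1) (aut_mem_Hol p.2)⟩) ⟨?_, ?_⟩
  · rintro ⟨a, f⟩ ⟨b, g⟩ hab
    have h := Subtype.ext_iff.mp hab
    have h1 : ∀ x, a * f x = b * g x := by
      intro x
      have := congrArg (fun σ : Equiv.Perm G => σ x) h
      simpa [Equiv.Perm.mul_apply, MulAction.toPermHom_apply, MulAction.toPerm_apply,
        smul_eq_mul] using this
    have hab' : a = b := by simpa using h1 1
    subst hab'
    have : ∀ x, f x = g x := fun x => mul_left_cancel (h1 x)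
    simp only [Prod.mk.injEq, true_and]
    ext x
    exact this x
  · rintro ⟨σ, hσ⟩
    obtain ⟨a, f, hf⟩ := hol_decomp hσ
    refine ⟨(a, f), ?_⟩
    ext x
    show ((MulAction.toPermHom G G) a * (f : Equiv.Perm G)) x = σ x
    simp [Equiv.Perm.mul_apply, MulAction.toPermHom_apply, MulAction.toPerm_apply, smul_eq_mul]
    exact (hf x).symm

lemma card_Hol (G : Type*) [Group G] :
    Nat.card (Hol G) = Nat.card G * Nat.card (MulAut G) := by
  rw [← Nat.card_congr (holEquiv (G := G)), Nat.card_prod]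

end HolAux

namespace BaerAux

open scoped commutatorElement

variable {N : Type*} [Group N]

/-- shuffle a central element past `b`. -/
lemma cmul {u : N} (hu : ∀ w : N, Commute u w) (a b : N) : a * u * b = a * b * u := by
  rw [mul_assoc, (hu b).eq, ← mul_assoc]

lemma comm_eq_one_of_central {z : N} (hz : ∀ w : N, Commute z w) (x : N) : ⁅x, z⁆ = 1 :=
  commutatorElement_eq_one_iff_commute.mpr (hz x).symm

section identities
variable (hc : ∀ x y z : N, Commute ⁅x, y⁆ z)
include hc

lemma mul_comm_comm (x y : N) : y * x = x * y * ⁅y, x⁆ := by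
  have h : y * x = ⁅y, x⁆ * (x * y) := by group
  rw [h, (hc y x (x * y)).eq]

lemma comm_mul_left (x y z : N) : ⁅x * y, z⁆ = ⁅x, z⁆ * ⁅y, z⁆ := by
  have key : ⁅x * y, z⁆ = x * ⁅y, z⁆ * x⁻¹ * ⁅x, z⁆ := by group
  rw [key, cmul (fun w => hc y z w) x x⁻¹, mul_inv_cancel, one_mul, (hc y z _).eq]

lemma comm_mul_right (x y z : N) : ⁅x, y * z⁆ = ⁅x, y⁆ * ⁅x, z⁆ := by
  calc ⁅x, y * z⁆ = ⁅y * z, x⁆⁻¹ := (commutatorElement_inv (y*z) x).symm ▸ rfl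
    _ = (⁅y, x⁆ * ⁅z, x⁆)⁻¹ := by rw [comm_mul_left hc]
    _ = ⁅z, x⁆⁻¹ * ⁅y, x⁆⁻¹ := mul_inv_rev _ _
    _ = ⁅x, z⁆ * ⁅x, y⁆ := by rw [commutatorElement_inv, commutatorElement_inv]
    _ = ⁅x, y⁆ * ⁅x, z⁆ := (hc x z _).eq

lemma comm_central_right {z : N} (hz : ∀ w : N, Commute z w) (x y : N) :
    ⁅x, y * z⁆ = ⁅x, y⁆ := by
  rw [comm_mul_right hc, comm_eq_one_of_central hz, mul_one]

lemma comm_central_left {z : N} (hz : ∀ w : N, Commute z w) (x y : N) :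
    ⁅y * z, x⁆ = ⁅y, x⁆ := by
  rw [comm_mul_left hc]
  have : ⁅z, x⁆ = 1 := by
    have := comm_eq_one_of_central hz x
    rw [← commutatorElement_inv, this, inv_one]
  rw [this, mul_one]

lemma comm_inv_left (x y : N) : ⁅x⁻¹, y⁆ = ⁅x, y⁆⁻¹ := by
  have h : ⁅x⁻¹ * x, y⁆ = ⁅x⁻¹, y⁆ * ⁅x, y⁆ := comm_mul_left hc _ _ _
  rw [inv_mul_cancel] at h
  have h1 : ⁅(1 : N), y⁆ = 1 := by group
  rw [h1] at h
  exact eq_inv_of_mul_eq_one_left h.symm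

end identities

/-- The Baer product `x ∘ y = x y ⁅y,x⁆^k`. -/
def baerMul (k : ℕ) (x y : N) : N := x * y * ⁅y, x⁆ ^ k

section baer
variable (k : ℕ) (hc : ∀ x y z : N, Commute ⁅x, y⁆ z)
  (hk : ∀ x y : N, ⁅x, y⁆ ^ (2 * k) = ⁅x, y⁆)

lemma hpowc (x y : N) (hc : ∀ x y z : N, Commute ⁅x, y⁆ z) :
    ∀ w : N, Commute (⁅x, y⁆ ^ k) w := fun w => (hc x y w).pow_left k

include hc hk

lemma baerMul_comm (x y : N) : baerMul k x y = baerMul k y x := by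
  unfold baerMul
  rw [mul_comm_comm hc x y, ← commutatorElement_inv y x, mul_assoc (x * y)]
  have hcc : ⁅y, x⁆ * ⁅y, x⁆⁻¹ ^ k = ⁅y, x⁆ ^ k := by
    have step : ⁅y, x⁆ * ⁅y, x⁆⁻¹ ^ k = ⁅y, x⁆ ^ (2*k) * ⁅y, x⁆⁻¹ ^ k := by rw [hk]
    rw [step, two_mul, pow_add, inv_pow, mul_inv_cancel_right]
  rw [hcc]

include hc in
lemma baerMul_assoc (x y z : N) :
    baerMul k (baerMul k x y) z = baerMul k x (baerMul k y z) := by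
  unfold baerMul
  have e1 : ⁅z, x * y * ⁅y, x⁆ ^ k⁆ = ⁅z, x⁆ * ⁅z, y⁆ := by
    rw [comm_central_right hc (hpowc k y x hc), comm_mul_right hc]
  have e2 : ⁅y * z * ⁅z, y⁆ ^ k, x⁆ = ⁅y, x⁆ * ⁅z, x⁆ := by
    rw [comm_central_left hc (hpowc k z y hc), comm_mul_left hc]
  rw [e1, e2, (hc z x ⁅z,y⁆).mul_pow, (hc y x ⁅z,x⁆).mul_pow]
  -- LHS : x * y * c1 * z * (c2 * c3), RHS : x * (y * z * c4) * (c1' * c2')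
  rw [cmul (hpowc k y x hc) (x * y) z]
  -- LHS : x * y * z * c1 * (c2 * c3)
  rw [← mul_assoc (x * y * z * ⁅y,x⁆^k)]
  -- RHS side
  rw [← mul_assoc x (y*z) (⁅z,y⁆^k), ← mul_assoc x y z]
  rw [← mul_assoc, cmul (hpowc k z y hc) (x*y*z) (⁅y,x⁆^k),
    cmul (hpowc k z y hc) (x*y*z*⁅y,x⁆^k) (⁅z,x⁆^k)]

include hc in
lemma baer_key1 (g b x : N) :
    g * baerMul k b x = baerMul k (b * ⁅g, b⁆ ^ k) (g * x) := by
  unfold baerMul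
  have e1 : ⁅g * x, b * ⁅g, b⁆ ^ k⁆ = ⁅g, b⁆ * ⁅x, b⁆ := by
    rw [comm_central_right hc (hpowc k g b hc), comm_mul_left hc]
  rw [e1, (hc g b ⁅x, b⁆).mul_pow]
  rw [cmul (hpowc k g b hc) b (g*x)]
  rw [← mul_assoc (b*(g*x)*⁅g,b⁆^k) (⁅g,b⁆^k) (⁅x,b⁆^k),
    mul_assoc (b*(g*x)) (⁅g,b⁆^k) (⁅g,b⁆^k)]
  have e2 : ⁅g,b⁆^k * ⁅g,b⁆^k = ⁅g,b⁆ := by rw [← pow_add, ← two_mul, hk]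
  rw [e2]
  -- RHS now: b*(g*x)*⁅g,b⁆*⁅x,b⁆^k
  rw [← mul_assoc g (b*x) (⁅x,b⁆^k), ← mul_assoc g b x, mul_comm_comm hc b g,
    cmul (fun w => hc g b w) (b*g) x, ← mul_assoc b g x]

omit hk in
include hc in
lemma baer_one_mul (x : N) : baerMul k 1 x = x := by
  unfold baerMul
  have : ⁅x, (1:N)⁆ = 1 := by group
  rw [this, one_pow, mul_one, one_mul]

omit hk in
include hc in
lemma baer_inv_mul (x : N) : baerMul k x⁻¹ x = 1 := by
  unfold baerMul
  have : ⁅x, x⁻¹⁆ = 1 :=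
    commutatorElement_eq_one_iff_commute.mpr ((Commute.refl x).inv_right)
  rw [this, one_pow, mul_one, inv_mul_cancel]

/-- The Baer abelian group structure. -/
def baerCommGroup : CommGroup N where
  mul := baerMul k
  one := 1
  inv := Inv.inv
  div := fun x y => baerMul k x y⁻¹
  div_eq_mul_inv := fun _ _ => rfl
  npow := fun n x => @npowRec N ⟨1⟩ ⟨baerMul k⟩ n x
  npow_zero := fun _ => rfl
  npow_succ := fun _ _ => rfl
  zpow := fun n x => @zpowRec N ⟨1⟩ ⟨baerMul k⟩ ⟨Inv.inv⟩ (@npowRec N ⟨1⟩ ⟨baerMul k⟩) n x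
  zpow_zero' := fun _ => rfl
  zpow_succ' := fun _ _ => rfl
  zpow_neg' := fun _ _ => rfl
  mul_assoc := baerMul_assoc k hc hk
  one_mul := baer_one_mul k hc
  mul_one := fun x => by
    show baerMul k x 1 = x
    rw [baerMul_comm k hc hk x 1]
    exact baer_one_mul k hc x
  inv_mul_cancel := baer_inv_mul k hc
  mul_comm := baerMul_comm k hc hk

omit hk in
include hc in
lemma baer_key2 {F : Type*} [FunLike F N N] [MonoidHomClass F N N] (f : F) (x y : N) :
    f (baerMul k x y) = baerMul k (f x) (f y) := by
  simp [baerMul, map_mul, map_pow, map_commutatorElement]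

end baer
end BaerAux

namespace ClsAux

/-- sum of `min · (k+1)` equals sum of `min · k` plus the number of elements `≥ k+1`. -/
lemma sum_min_succ (s : Multiset ℕ) (k : ℕ) :
    (s.map (fun a => min a (k+1))).sum
      = (s.map (fun a => min a k)).sum + Multiset.card (s.filter (fun a => k+1 ≤ a)) := by
  induction s using Multiset.induction with
  | empty => simp
  | cons a s ih =>
      simp only [Multiset.map_cons, Multiset.sum_cons, Multiset.filter_cons, ih]
      by_cases h : k + 1 ≤ a <;> simp [h] <;> omega

lemma card_filter_split (s : Multiset ℕ) (k : ℕ) :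
    Multiset.card (s.filter (fun a => k ≤ a))
      = Multiset.card (s.filter (fun a => a = k))
        + Multiset.card (s.filter (fun a => k+1 ≤ a)) := by
  induction s using Multiset.induction with
  | empty => simp
  | cons a s ih =>
      simp only [Multiset.filter_cons, ih]
      rcases le_or_gt (k+1) a with h | h
      · simp [show k ≤ a by omega, show ¬ a = k by omega, h]
        simp only [Nat.lt_iff_add_one_le] at *
        omega
      · by_cases h2 : a = k
        · simp [show k ≤ a by omega, h2, show ¬ k+1 ≤ a by omega]
          simp only [Nat.lt_iff_add_one_le] at *
          omega
        · simp [show ¬ k ≤ a by omega, h2, show ¬ k+1 ≤ a by omega]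
          exact ih

lemma multiset_eq_of_min_sums {s t : Multiset ℕ}
    (hs : ∀ a ∈ s, 0 < a) (ht : ∀ a ∈ t, 0 < a)
    (h : ∀ k, (s.map (fun a => min a k)).sum = (t.map (fun a => min a k)).sum) :
    s = t := by
  have hfil : ∀ k, Multiset.card (s.filter (fun a => k+1 ≤ a))
      = Multiset.card (t.filter (fun a => k+1 ≤ a)) := by
    intro k
    have h1 := sum_min_succ s k
    have h2 := sum_min_succ t k
    rw [h k, h (k+1)] at h1
    omega
  have hfil' : ∀ k, 0 < k → Multiset.card (s.filter (fun a => k ≤ a))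
      = Multiset.card (t.filter (fun a => k ≤ a)) := by
    intro k hk
    obtain ⟨k, rfl⟩ := Nat.exists_eq_succ_of_ne_zero hk.ne'
    exact hfil k
  ext a
  rcases Nat.eq_zero_or_pos a with rfl | ha
  · rw [Multiset.count_eq_zero.mpr (fun hmem => lt_irrefl 0 (hs 0 hmem)),
      Multiset.count_eq_zero.mpr (fun hmem => lt_irrefl 0 (ht 0 hmem))]
  · have c1 := card_filter_split s a
    have c2 := card_filter_split t a
    rw [hfil' a ha, hfil a] at c1
    have : Multiset.card (s.filter (fun x => x = a))
        = Multiset.card (t.filter (fun x => x = a)) := by omega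
    rw [Multiset.count_eq_card_filter_eq, Multiset.count_eq_card_filter_eq]
    simpa [eq_comm] using this

/-- number of `m`-th roots of 1 in a finite cyclic group. -/
lemma card_pow_eq_one_cyclic (G : Type*) [Group G] [Fintype G] [IsCyclic G]
    {m : ℕ} (hm : m ≠ 0) :
    Nat.card {x : G // x ^ m = 1} = Nat.gcd m (Fintype.card G) := by
  letI := Classical.decEq G
  have step : ∀ d ∈ m.divisors,
      (Finset.filter (fun x : G => orderOf x = d) Finset.univ).card
        = if d ∣ Fintype.card G then d.totient else 0 := by
    intro d _
    by_cases hd : d ∣ Fintype.card G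
    · rw [if_pos hd, IsCyclic.card_orderOf_eq_totient hd]
    · rw [if_neg hd, Finset.card_eq_zero]
      ext x
      simp only [Finset.mem_filter, Finset.mem_univ, true_and, Finset.notMem_empty, iff_false]
      intro hx
      exact hd (hx ▸ orderOf_dvd_card)
  have hset : m.divisors.filter (fun d => d ∣ Fintype.card G)
      = (Nat.gcd m (Fintype.card G)).divisors := by
    ext d
    simp only [Finset.mem_filter, Nat.mem_divisors, Nat.dvd_gcd_iff]
    have hg : Nat.gcd m (Fintype.card G) ≠ 0 := by
      simp [Nat.gcd_eq_zero_iff, hm]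
    tauto
  have key : (Finset.filter (fun x : G => x ^ m = 1) Finset.univ).card
      = Nat.gcd m (Fintype.card G) := by
    rw [← sum_card_orderOf_eq_card_pow_eq_one hm,
      Finset.sum_congr rfl step, ← Finset.sum_filter, hset, Nat.sum_totient]
  rw [Nat.card_eq_fintype_card, Fintype.card_subtype]
  convert key using 2

end ClsAux

namespace ClsAux2
open ClsAux

lemma card_pow_eq_one_eq_sum (G : Type*) [Group G] [Fintype G] {m : ℕ} (hm : m ≠ 0) :
    Nat.card {x : G // x ^ m = 1} = ∑ d ∈ m.divisors, Nat.card {x : G // orderOf x = d} := by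
  letI := Classical.decEq G
  have key := sum_card_orderOf_eq_card_pow_eq_one (G := G) (n := m) hm
  calc Nat.card {x : G // x ^ m = 1}
      = (Finset.filter (fun x : G => x ^ m = 1) Finset.univ).card := by
        rw [Nat.card_eq_fintype_card, Fintype.card_subtype]
    _ = ∑ d ∈ m.divisors, (Finset.filter (fun x : G => orderOf x = d) Finset.univ).card :=
        key.symm
    _ = ∑ d ∈ m.divisors, Nat.card {x : G // orderOf x = d} := by
        refine Finset.sum_congr rfl fun d _ => ?_
        rw [Nat.card_eq_fintype_card, Fintype.card_subtype]

lemma gcd_prime_pow {p : ℕ} (hp : p.Prime) (k e : ℕ) :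
    Nat.gcd (p ^ k) (p ^ e) = p ^ (min e k) := by
  rcases le_total k e with h | h
  · rw [Nat.gcd_eq_left (pow_dvd_pow p h), min_eq_right h]
  · rw [Nat.gcd_eq_right (pow_dvd_pow p h), min_eq_left h]

lemma card_pow_pi {ι : Type*} [Fintype ι] (e : ι → ℕ) {p : ℕ} (hp : p.Prime) (k : ℕ) :
    Nat.card {x : (i : ι) → Multiplicative (ZMod (p ^ e i)) // x ^ (p ^ k) = 1}
      = p ^ (∑ i, min (e i) k) := by
  haveI : ∀ i, NeZero (p ^ e i) := fun i => ⟨pow_ne_zero _ hp.pos.ne'⟩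
  have he : ∀ x : (i : ι) → Multiplicative (ZMod (p ^ e i)),
      (x ^ (p ^ k) = 1) ↔ ∀ i, (x i) ^ (p ^ k) = 1 := by
    intro x
    rw [funext_iff]
    simp [Pi.pow_apply]
  rw [Nat.card_congr ((Equiv.subtypeEquivRight he).trans
      (Equiv.subtypePiEquivPi (p := fun i (b : Multiplicative (ZMod (p ^ e i))) =>
        b ^ (p ^ k) = 1))),
    Nat.card_pi]
  rw [Finset.prod_congr rfl (fun i _ => ?_), Finset.prod_pow_eq_pow_sum]
  rw [card_pow_eq_one_cyclic _ (pow_ne_zero _ hp.pos.ne'),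
    Fintype.card_multiplicative, ZMod.card, gcd_prime_pow hp]

/-- A `Multiplicative (ZMod _)`-congruence from an equality of moduli. -/
def zmodCongr {a b : ℕ} (h : a = b) : Multiplicative (ZMod a) ≃* Multiplicative (ZMod b) := by
  subst h; exact MulEquiv.refl _

/-- Reindexing a product of monoids along an equivalence. -/
def piReindex {α β : Type*} (e : α ≃ β) (P : β → Type*) [∀ b, Monoid (P b)] :
    ((b : β) → P b) ≃* ((a : α) → P (e a)) :=
  MulEquiv.mk' (Equiv.piCongrLeft' P e.symm) (fun f g => rfl)

theorem exists_mulEquiv_of_counts {p n : ℕ} (hp : p.Prime)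
    {A B : Type*} [CommGroup A] [Fintype A] [CommGroup B] [Fintype B]
    (hA : Fintype.card A = p ^ n) (hB : Fintype.card B = p ^ n)
    (hcounts : ∀ d : ℕ, 0 < d →
      Nat.card {a : A // orderOf a = d} = Nat.card {b : B // orderOf b = d}) :
    Nonempty (A ≃* B) := by
  classical
  obtain ⟨ι, hι, mA, hmA, ⟨eA⟩⟩ := CommGroup.equiv_prod_multiplicative_zmod_of_finite A
  obtain ⟨κ, hκ, mB, hmB, ⟨eB⟩⟩ := CommGroup.equiv_prod_multiplicative_zmod_of_finite B
  -- each modulus is a power of p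
  haveI : ∀ i, NeZero (mA i) := fun i => ⟨by have := hmA i; omega⟩
  haveI : ∀ j, NeZero (mB j) := fun j => ⟨by have := hmB j; omega⟩
  have hcA : ∀ i, mA i ∣ p ^ n := by
    intro i
    have h1 : Fintype.card A = ∏ i, mA i := by
      rw [Fintype.card_congr eA.toEquiv, Fintype.card_pi]
      exact Finset.prod_congr rfl fun i _ => by
        rw [Fintype.card_multiplicative, ZMod.card]
    exact hA ▸ h1 ▸ Finset.dvd_prod_of_mem mA (Finset.mem_univ i)
  have hcB : ∀ j, mB j ∣ p ^ n := by
    intro j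
    have h1 : Fintype.card B = ∏ j, mB j := by
      rw [Fintype.card_congr eB.toEquiv, Fintype.card_pi]
      exact Finset.prod_congr rfl fun j _ => by
        rw [Fintype.card_multiplicative, ZMod.card]
    exact hB ▸ h1 ▸ Finset.dvd_prod_of_mem mB (Finset.mem_univ j)
  have hexA : ∀ i, ∃ t, mA i = p ^ t := fun i => by
    obtain ⟨t, _, ht⟩ := (Nat.dvd_prime_pow hp).mp (hcA i); exact ⟨t, ht⟩
  have hexB : ∀ j, ∃ t, mB j = p ^ t := fun j => by
    obtain ⟨t, _, ht⟩ := (Nat.dvd_prime_pow hp).mp (hcB j); exact ⟨t, ht⟩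
  choose ea hea using hexA
  choose eb heb using hexB
  rw [show mA = fun i => p ^ ea i from funext hea] at eA
  rw [show mB = fun j => p ^ eb j from funext heb] at eB
  have hposA : ∀ i, 0 < ea i := by
    intro i
    rcases Nat.eq_zero_or_pos (ea i) with h | h
    · exfalso
      have h2 := hmA i
      rw [hea i, h, pow_zero] at h2
      omega
    · exact h
  have hposB : ∀ j, 0 < eb j := by
    intro j
    rcases Nat.eq_zero_or_pos (eb j) with h | h
    · exfalso
      have h2 := hmB j
      rw [heb j, h, pow_zero] at h2
      omega
    · exact h
  -- the counting function
  have hS : ∀ m : ℕ, m ≠ 0 →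
      Nat.card {x : A // x ^ m = 1} = Nat.card {x : B // x ^ m = 1} := by
    intro m hm0
    rw [card_pow_eq_one_eq_sum A hm0, card_pow_eq_one_eq_sum B hm0]
    exact Finset.sum_congr rfl fun d hd => hcounts d (Nat.pos_of_mem_divisors hd)
  -- transport counts through the isomorphisms
  have hSA : ∀ k : ℕ, Nat.card {x : A // x ^ (p ^ k) = 1} = p ^ (∑ i, min (ea i) k) := by
    intro k
    rw [← card_pow_pi ea hp k]
    exact Nat.card_congr (eA.toEquiv.subtypeEquiv fun x => by
      constructor
      · intro h
        show (eA x) ^ (p ^ k) = 1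
        rw [← map_pow, h, map_one]
      · intro h
        have h2 : eA (x ^ (p ^ k)) = eA 1 := by
          rw [map_pow, map_one]
          exact h
        exact eA.injective h2)
  have hSB : ∀ k : ℕ, Nat.card {x : B // x ^ (p ^ k) = 1} = p ^ (∑ j, min (eb j) k) := by
    intro k
    rw [← card_pow_pi eb hp k]
    exact Nat.card_congr (eB.toEquiv.subtypeEquiv fun x => by
      constructor
      · intro h
        show (eB x) ^ (p ^ k) = 1
        rw [← map_pow, h, map_one]
      · intro h
        have h2 : eB (x ^ (p ^ k)) = eB 1 := by
          rw [map_pow, map_one]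
          exact h
        exact eB.injective h2)
  have hsum : ∀ k : ℕ, (∑ i, min (ea i) k) = ∑ j, min (eb j) k := by
    intro k
    apply Nat.pow_right_injective hp.two_le
    show (p:ℕ) ^ (∑ i, min (ea i) k) = p ^ (∑ j, min (eb j) k)
    rw [← hSA k, ← hSB k]
    exact hS _ (pow_ne_zero _ hp.pos.ne')
  -- multisets of exponents agree
  have hms : Multiset.map ea Finset.univ.val = Multiset.map eb Finset.univ.val := by
    apply multiset_eq_of_min_sums
    · intro a ha
      obtain ⟨i, _, rfl⟩ := Multiset.mem_map.mp ha
      exact hposA i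
    · intro a ha
      obtain ⟨j, _, rfl⟩ := Multiset.mem_map.mp ha
      exact hposB j
    · intro k
      rw [Multiset.map_map, Multiset.map_map]
      exact hsum k
  -- fibers have equal cardinality
  have hfib : ∀ v : ℕ, Fintype.card {i : ι // ea i = v} = Fintype.card {j : κ // eb j = v} := by
    intro v
    have h1 : ∀ {γ : Type} (inst : Fintype γ) (f : γ → ℕ),
        Fintype.card {i : γ // f i = v} = Multiset.count v (Multiset.map f Finset.univ.val) := by
      intro γ inst f
      rw [Fintype.card_subtype, Multiset.count_map]
      rw [Finset.card, Finset.filter_val]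
      congr 1
      exact Multiset.filter_congr fun i _ => by constructor <;> (intro h; exact h.symm)
    rw [h1 hι ea, h1 hκ eb, hms]
  -- build the reindexing equivalence
  let σ : ι ≃ κ :=
    (Equiv.sigmaFiberEquiv ea).symm.trans
      ((Equiv.sigmaCongrRight fun v => Fintype.equivOfCardEq (hfib v)).trans
        (Equiv.sigmaFiberEquiv eb))
  have hσ : ∀ i, eb (σ i) = ea i := by
    intro i
    exact ((Fintype.equivOfCardEq (hfib (ea i))) ⟨i, rfl⟩).2
  -- assemble the isomorphism
  let iso1 := piReindex σ (fun j => Multiplicative (ZMod (p ^ eb j)))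
  let iso2 : ((i : ι) → Multiplicative (ZMod (p ^ eb (σ i))))
      ≃* ((i : ι) → Multiplicative (ZMod (p ^ ea i))) :=
    MulEquiv.piCongrRight fun i => zmodCongr (by rw [hσ i])
  exact ⟨eA.trans (((eB.trans iso1).trans iso2).symm)⟩

end ClsAux2

end

open scoped commutatorElement

/-- Type synonym carrying the Baer group structure. -/
def BaerSyn (N : Type*) : Type _ := N

set_option maxHeartbeats 1600000 in
theorem exists_regular_subgroup_iso_with_large_normalizer
    {p n : ℕ} (hp : p.Prime) (hodd : Odd p)
    {N : Type*} [Group N] [Fintype N] (hN : Fintype.card N = p ^ n)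
    (hcomm : Nat.card (commutator N) = p)
    {A : Type*} [CommGroup A] [Fintype A] (hA : Fintype.card A = p ^ n)
    (hcounts : ∀ d : ℕ, 0 < d →
      Nat.card {a : A // orderOf a = d} = Nat.card {x : N // orderOf x = d}) :
    ∃ N' : Subgroup (Equiv.Perm A), N' ≤ Hol A ∧ IsRegularSubgroup N' ∧
      Nonempty (N' ≃* N) ∧
      Nat.card ((Subgroup.normalizer (N' : Set (Equiv.Perm A)) ⊓ Hol A : Subgroup (Equiv.Perm A))) =
        Nat.card N * Nat.card (MulAut N) := by
  haveI : Fact p.Prime := ⟨hp⟩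
  -- Step 1: the commutator subgroup is central and of exponent p
  have hcyc : IsCyclic (commutator N) := isCyclic_of_prime_card hcomm
  have hAutCard : Nat.card (MulAut ↥(commutator N)) = p - 1 := by
    rw [IsCyclic.card_mulAut, hcomm, Nat.totient_prime hp]
  have hcentral : ∀ w : N, ∀ h ∈ commutator N, w * h = h * w := by
    intro g h hh
    have hcop : Nat.Coprime (p ^ n) (p - 1) := by
      apply Nat.Coprime.pow_left
      simp [Nat.coprime_self_sub_right (Nat.one_le_iff_ne_zero.mpr hp.pos.ne')]
    have hc1 : MulAut.conjNormal (H := commutator N) g = 1 := by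
      rw [← orderOf_eq_one_iff]
      have hd1 : orderOf (MulAut.conjNormal (H := commutator N) g) ∣ p - 1 := by
        rw [← hAutCard]
        exact orderOf_dvd_natCard _
      have hd2 : orderOf (MulAut.conjNormal (H := commutator N) g) ∣ p ^ n := by
        refine dvd_trans (orderOf_map_dvd _ g) ?_
        rw [← hN]
        exact orderOf_dvd_card
      exact Nat.eq_one_of_dvd_coprimes hcop hd2 hd1
    have := congrArg (fun f : MulAut ↥(commutator N) => ((f ⟨h, hh⟩ : ↥(commutator N)) : N)) hc1
    simp only [MulAut.conjNormal_apply, MulAut.one_apply] at this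
    calc g * h = g * h * g⁻¹ * g := by group
      _ = h * g := by rw [this]
  have hc : ∀ x y z : N, Commute ⁅x, y⁆ z := by
    intro x y z
    have hmem : ⁅x, y⁆ ∈ commutator N :=
      Subgroup.commutator_mem_commutator (Subgroup.mem_top x) (Subgroup.mem_top y)
    exact ((hcentral z ⁅x, y⁆ hmem).symm : _)
  have hordp : ∀ x y : N, ⁅x, y⁆ ^ p = 1 := by
    intro x y
    have hmem : ⁅x, y⁆ ∈ commutator N :=
      Subgroup.commutator_mem_commutator (Subgroup.mem_top x) (Subgroup.mem_top y)
    have hel : (⟨⁅x, y⁆, hmem⟩ : ↥(commutator N)) ^ p = 1 := by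
      rw [← hcomm]
      exact pow_card_eq_one'
    have := congrArg (fun z : ↥(commutator N) => (z : N)) hel
    simpa using this
  -- Step 2: the Baer abelian group structure
  obtain ⟨m, hm2⟩ := hodd
  set k : ℕ := m + 1 with hkdef
  have h2k : 2 * k = p + 1 := by omega
  have hk : ∀ x y : N, ⁅x, y⁆ ^ (2 * k) = ⁅x, y⁆ := by
    intro x y
    rw [h2k, pow_succ, hordp x y, one_mul]
  letI GB : CommGroup (BaerSyn N) := (BaerAux.baerCommGroup k hc hk : CommGroup N)
  letI : Fintype (BaerSyn N) := (inferInstance : Fintype N)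
  have hmulB : ∀ x y : BaerSyn N, x * y = BaerAux.baerMul (N := N) k x y := fun _ _ => rfl
  have hpowB : ∀ (x : BaerSyn N) (q : ℕ), x ^ q = (show N from x) ^ q := by
    intro x q
    induction q with
    | zero => exact (pow_zero x).trans (pow_zero (show N from x)).symm
    | succ q ih =>
        have key : BaerAux.baerMul (N := N) k ((show N from x) ^ q) (show N from x)
            = (show N from x) ^ (q + 1) := by
          unfold BaerAux.baerMul
          rw [commutatorElement_eq_one_iff_commute.mpr
              ((Commute.refl (show N from x)).pow_right q),
            one_pow, mul_one, ← pow_succ]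
        exact (pow_succ x q).trans ((congrArg (fun y : BaerSyn N => y * x) ih).trans key)
  have horder : ∀ x : BaerSyn N, orderOf x = orderOf (show N from x) := by
    intro x
    rw [orderOf_eq_orderOf_iff]
    intro q
    rw [hpowB x q]
    exact Iff.rfl
  have hcardB : Fintype.card (BaerSyn N) = p ^ n := hN
  have hcounts' : ∀ d : ℕ, 0 < d →
      Nat.card {a : A // orderOf a = d} = Nat.card {x : BaerSyn N // orderOf x = d} := by
    intro d hd
    rw [hcounts d hd]
    refine (Nat.card_congr (Equiv.subtypeEquiv (Equiv.refl _) fun x => ?_)).symm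
    rw [horder x]
    exact Iff.rfl
  obtain ⟨φ⟩ : Nonempty (A ≃* BaerSyn N) :=
    ClsAux2.exists_mulEquiv_of_counts hp hA hcardB hcounts'
  -- Step 3: transport permutations along `ψ : N ≃ A`
  let ψ : N ≃ A := (φ.symm.toEquiv : BaerSyn N ≃ A)
  let Φ : Equiv.Perm N ≃* Equiv.Perm A :=
    MulEquiv.mk' (Equiv.permCongr ψ) (fun σ τ => by
      ext a
      simp [Equiv.permCongr_apply, Equiv.Perm.mul_apply])
  have hΦ : ∀ (σ : Equiv.Perm N) (a : A), Φ σ a = ψ (σ (φ a)) := fun σ a => rfl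
  have hΦ' : ∀ (σ : Equiv.Perm N) (a : A), (Φ.toMonoidHom σ) a = ψ (σ (φ a)) :=
    fun σ a => rfl
  have hφmul : ∀ a b : A, (φ (a * b) : N) = BaerAux.baerMul (N := N) k (φ a) (φ b) :=
    fun a b => map_mul φ a b
  have hψmul : ∀ u v : N, ψ (BaerAux.baerMul (N := N) k u v) = ψ u * ψ v :=
    fun u v => map_mul φ.symm (show BaerSyn N from u) (show BaerSyn N from v)
  have hψφ : ∀ a : A, ψ (φ a) = a := fun a => φ.symm_apply_apply a
  set H : Subgroup (Equiv.Perm N) := (MulAction.toPermHom N N).range with hHdef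
  set N' : Subgroup (Equiv.Perm A) := Subgroup.map Φ.toMonoidHom H with hN'def
  -- main conjugation computation
  have main : ∀ σ ∈ Hol N, ∀ c : A, ∃ b : A, ∀ x : A, (Φ σ) (c * x) = b * (Φ σ) x := by
    intro σ hσ c
    obtain ⟨a, f, hdecomp⟩ := HolAux.hol_decomp hσ
    refine ⟨ψ ((f (φ c) : N) * ⁅a, (f (φ c) : N)⁆ ^ k), fun x => ?_⟩
    calc (Φ σ) (c * x) = ψ (σ (φ (c * x))) := hΦ σ _
      _ = ψ (σ (BaerAux.baerMul (N := N) k (φ c) (φ x))) := by rw [hφmul c x]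
      _ = ψ (a * f (BaerAux.baerMul (N := N) k (φ c) (φ x))) := by rw [hdecomp]
      _ = ψ (a * BaerAux.baerMul (N := N) k (f (φ c)) (f (φ x))) := by
            exact congrArg (fun t => ψ (a * t)) (BaerAux.baer_key2 k hc f _ _)
      _ = ψ (BaerAux.baerMul (N := N) k ((f (φ c) : N) * ⁅a, (f (φ c) : N)⁆ ^ k) (a * f (φ x))) := by
            rw [BaerAux.baer_key1 k hc hk]
      _ = ψ ((f (φ c) : N) * ⁅a, (f (φ c) : N)⁆ ^ k) * ψ (a * f (φ x)) := hψmul _ _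
      _ = ψ ((f (φ c) : N) * ⁅a, (f (φ c) : N)⁆ ^ k) * (Φ σ) x := by
            rw [hΦ σ x, hdecomp (φ x)]
  have hHolA : ∀ σ ∈ Hol N, Φ σ ∈ Hol A := by
    intro σ hσ
    apply HolAux.mem_Hol_of
    · intro c
      exact main σ hσ c
    · intro c
      obtain ⟨b, hb⟩ := main σ⁻¹ (inv_mem hσ) c
      refine ⟨b, fun x => ?_⟩
      have h1 : ∀ y, (Φ σ).symm y = (Φ σ⁻¹) y := fun y => by rw [map_inv]; rfl
      rw [h1, h1]
      exact hb x
  have hnorm_eq : Subgroup.normalizer (N' : Set (Equiv.Perm A)) = Subgroup.map Φ.toMonoidHom (Hol N) :=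
    (Subgroup.map_equiv_normalizer_eq H Φ).symm
  have hnorm_le : Subgroup.normalizer (N' : Set (Equiv.Perm A)) ≤ Hol A := by
    rw [hnorm_eq]
    rintro σ ⟨τ, hτ, rfl⟩
    exact hHolA τ hτ
  refine ⟨N', le_trans Subgroup.le_normalizer hnorm_le, ⟨?_, ?_⟩, ⟨?_⟩, ?_⟩
  · -- transitivity
    intro x y
    refine ⟨Φ ((MulAction.toPermHom N N) ((show N from φ y) * (show N from φ x)⁻¹)),
      Subgroup.mem_map_of_mem _ ⟨(show N from φ y) * (show N from φ x)⁻¹, rfl⟩, ?_⟩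
    rw [hΦ]
    have h1 : (MulAction.toPermHom N N) ((show N from φ y) * (show N from φ x)⁻¹) (φ x)
        = (show N from φ y) * (show N from φ x)⁻¹ * (show N from φ x) := rfl
    rw [h1, inv_mul_cancel_right]
    exact hψφ y
  · -- freeness
    rintro σ hσ x hfix
    obtain ⟨τ, hτ, rfl⟩ := hσ
    obtain ⟨g, rfl⟩ := hτ
    rw [hΦ'] at hfix
    have h2 : (MulAction.toPermHom N N) g (φ x) = φ x := by
      have h3 := ψ.apply_eq_iff_eq_symm_apply.mp hfix
      exact h3
    have h3 : g * (show N from φ x) = (show N from φ x) := h2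
    have h4 : g = 1 := mul_eq_right.mp h3
    rw [h4, map_one, map_one]
  · -- isomorphism with N
    have hinj : Function.Injective (MulAction.toPermHom N N) := by
      intro g₁ g₂ h
      have := congrArg (fun σ : Equiv.Perm N => σ 1) h
      simpa using this
    exact ((MonoidHom.ofInjective hinj).trans (MulEquiv.subgroupMap Φ H)).symm
  · -- cardinality of the normalizer
    have hinf : Subgroup.normalizer (N' : Set (Equiv.Perm A)) ⊓ Hol A = Subgroup.normalizer (N' : Set (Equiv.Perm A)) := inf_eq_left.mpr hnorm_le
    rw [hinf, hnorm_eq]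
    have hcard1 : Nat.card (Subgroup.map Φ.toMonoidHom (Hol N)) = Nat.card (Hol N) :=
      (Nat.card_congr (MulEquiv.subgroupMap Φ (Hol N)).toEquiv).symm
    rw [hcard1, HolAux.card_Hol N]
end
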